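/- arXiv:math/9801060 — 4 statements merged into one kernel-verified Lean document; each statement's English description precedes it below -/
import Mathlib

section
/- Let a, b, c be natural numbers with b ≥ 1. Let M be the b×b matrix over ℚ with entries M(i,j) = C(a+c, a+i-j) for 0 ≤ i,j < b, where C(n,k) denotes the binomial coefficient with the convention C(n,k) = 0 when k < 0 or k > n. Then det M = ∏_{i=0}^{a-1} ∏_{j=0}^{b-1} ∏_{k=0}^{c-1} (i+j+k+2)/(i+j+k+1). In particular the determinant of the Carlitz matrix equals the MacMahon product counting lozenge tilings of the a,b,c semiregular hexagon. -/
/-- Binomial coefficient `C(n, k)` for integer `k`, with the convention that it is `0`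
when `k < 0` (and, via `Nat.choose`, also when `k > n`). -/
def binom (n : ℕ) (k : ℤ) : ℕ := if 0 ≤ k then n.choose k.toNat else 0

open Finset Polynomial Nat

/-! ### Auxiliary lemmas -/

lemma fnz (n : ℕ) : ((n ! : ℕ) : ℚ) ≠ 0 := Nat.cast_ne_zero.2 n.factorial_ne_zero

lemma fact_shift (m n : ℕ) : m ! * ∏ k ∈ Finset.range n, (m + k + 1) = (m + n)! := by
  induction n with
  | zero => simp
  | succ n ih =>
      rw [Finset.prod_range_succ, ← mul_assoc, ih, show m + (n+1) = (m+n)+1 by ring,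
        Nat.factorial_succ]
      ring

lemma prod_add_range (q n : ℕ) :
    ∏ k ∈ Finset.range n, ((q:ℚ) + k + 1) = ((q+n)! : ℚ) / (q ! : ℚ) := by
  rw [eq_div_iff (fnz q), ← fact_shift q n]
  push_cast
  ring

lemma prod_sub_range' (n k : ℕ) (h : k ≤ n) :
    ∏ s ∈ Finset.range k, ((n:ℚ) - s) = (n.descFactorial k : ℚ) := by
  rw [Nat.descFactorial_eq_prod_range, Nat.cast_prod]
  apply Finset.prod_congr rfl
  intro s hs
  have hs' : s < k := Finset.mem_range.1 hs
  have : s ≤ n := le_trans hs'.le h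
  push_cast [Nat.cast_sub this]
  ring

/-- The auxiliary polynomial `∏_{s<j} (X - s) * ∏_{t=j+1}^{b-1} (d + t - X)`. -/
noncomputable def carlP (d b j : ℕ) : Polynomial ℚ :=
  (∏ s ∈ Finset.range j, (X - C (s:ℚ))) *
  (∏ t ∈ Finset.Ico (j+1) b, (C ((d:ℚ)+t) - X))

lemma carlP_natDegree_lt (d b j : ℕ) (hj : j < b) : (carlP d b j).natDegree < b := by
  have h1 : (∏ s ∈ Finset.range j, (X - C (s:ℚ))).natDegree ≤ j := by
    refine le_trans (Polynomial.natDegree_prod_le _ _) ?_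
    refine le_trans (Finset.sum_le_card_nsmul _ _ 1 ?_) (by simp)
    intro s _; exact (Polynomial.natDegree_X_sub_C _).le
  have h2 : (∏ t ∈ Finset.Ico (j+1) b, (C ((d:ℚ)+t) - X)).natDegree ≤ b - (j+1) := by
    refine le_trans (Polynomial.natDegree_prod_le _ _) ?_
    refine le_trans (Finset.sum_le_card_nsmul _ _ 1 ?_) (by simp [Nat.card_Ico])
    intro t _
    have h := Polynomial.natDegree_sub_le (C ((d:ℚ)+t)) X
    refine le_trans h ?_
    rw [Polynomial.natDegree_C, Polynomial.natDegree_X]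
    simp
  have := le_trans (Polynomial.natDegree_mul_le) (_root_.add_le_add h1 h2)
  unfold carlP
  omega

lemma carlP_eval (d b j : ℕ) (x : ℚ) :
    (carlP d b j).eval x =
      (∏ s ∈ Finset.range j, (x - s)) * (∏ t ∈ Finset.Ico (j+1) b, ((d:ℚ) + t - x)) := by
  simp [carlP, eval_prod]

/-- Evaluation matrix factors through the Vandermonde matrix. -/
lemma det_eval_nodes (d b : ℕ) (v : Fin b → ℚ) :
    (Matrix.of fun i j : Fin b => (carlP d b (j:ℕ)).eval (v i)).det
      = (Matrix.vandermonde v).det *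
        (Matrix.of fun m j : Fin b => (carlP d b (j:ℕ)).coeff (m:ℕ)).det := by
  rw [← Matrix.det_mul]
  congr 1
  ext i j
  rw [Matrix.mul_apply]
  simp only [Matrix.of_apply, Matrix.vandermonde]
  rw [Polynomial.eval_eq_sum_range' (carlP_natDegree_lt d b (j:ℕ) j.isLt) (v i),
    ← Fin.sum_univ_eq_sum_range]
  exact Finset.sum_congr rfl (fun m _ => mul_comm _ _)

/-- Shifting the evaluation nodes by `a` does not change the determinant. -/
lemma det_eval_shift (d a b : ℕ) :
    (Matrix.of fun i j : Fin b => (carlP d b (j:ℕ)).eval ((a:ℚ) + (i:ℕ))).det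
      = (Matrix.of fun i j : Fin b => (carlP d b (j:ℕ)).eval ((i:ℕ):ℚ)).det := by
  rw [det_eval_nodes, det_eval_nodes, Matrix.det_vandermonde, Matrix.det_vandermonde]
  congr 1
  refine Finset.prod_congr rfl fun i _ => Finset.prod_congr rfl fun j _ => by ring

/-- At the nodes `0, 1, …, b-1` the evaluation matrix is lower triangular. -/
lemma det_eval_id (d b : ℕ) :
    (Matrix.of fun i j : Fin b => (carlP d b (j:ℕ)).eval ((i:ℕ):ℚ)).det
      = ∏ i : Fin b,
          (((i:ℕ)! : ℚ) * ∏ t ∈ Finset.Ico ((i:ℕ)+1) b, ((d:ℚ) + t - (i:ℕ))) := by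
  rw [Matrix.det_of_lowerTriangular]
  · refine Finset.prod_congr rfl fun i _ => ?_
    rw [Matrix.of_apply, carlP_eval]
    congr 1
    rw [prod_sub_range' _ _ le_rfl, Nat.descFactorial_self]
  · intro i j hij
    have hij' : (i:ℕ) < (j:ℕ) := hij
    rw [Matrix.of_apply, carlP_eval]
    have : ((i:ℕ):ℚ) - ((i:ℕ):ℚ) = 0 := by ring
    rw [Finset.prod_eq_zero (Finset.mem_range.2 hij') this, zero_mul]

/-- Factorization of the Carlitz matrix entry as a row factor times `carlP` evaluated
at `a + i`. -/
lemma entry_eq (a c b : ℕ) (i j : Fin b) :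
    (binom (a + c) ((a : ℤ) + (i:ℕ) - (j:ℕ)) : ℚ)
      = ((a+c)! : ℚ) / (((a+(i:ℕ))! : ℚ) * ((c+(b-1-(i:ℕ)))! : ℚ))
        * (carlP (a+c) b (j:ℕ)).eval ((a:ℚ) + (i:ℕ)) := by
  have hib : (i:ℕ) < b := i.isLt
  have hjb : (j:ℕ) < b := j.isLt
  rw [carlP_eval]
  by_cases hj : (j:ℕ) ≤ a + (i:ℕ)
  · by_cases hi : (i:ℕ) ≤ c + (j:ℕ)
    · -- main case
      have hb0 : (0:ℤ) ≤ (a:ℤ) + (i:ℕ) - (j:ℕ) := by omega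
      have htn : ((a:ℤ) + (i:ℕ) - (j:ℕ)).toNat = a + (i:ℕ) - (j:ℕ) := by omega
      have hle : a + (i:ℕ) - (j:ℕ) ≤ a + c := by omega
      rw [binom, if_pos hb0, htn, Nat.cast_choose ℚ hle]
      have hp1 : ∏ s ∈ Finset.range (j:ℕ), ((a:ℚ) + (i:ℕ) - s)
          = ((a+(i:ℕ))! : ℚ) / ((a+(i:ℕ)-(j:ℕ))! : ℚ) := by
        have e1 : ∀ s ∈ Finset.range (j:ℕ), ((a:ℚ) + (i:ℕ) - s) = (((a+(i:ℕ)):ℕ):ℚ) - s := by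
          intro s _; push_cast; ring
        rw [Finset.prod_congr rfl e1, prod_sub_range' _ _ hj, eq_div_iff (fnz _),
          ← Nat.cast_mul, mul_comm, Nat.factorial_mul_descFactorial hj]
      have hp2 : ∏ t ∈ Finset.Ico ((j:ℕ)+1) b, (((a+c:ℕ):ℚ) + t - ((a:ℚ) + (i:ℕ)))
          = ((c+(b-1-(i:ℕ)))! : ℚ) / ((c+(j:ℕ)-(i:ℕ))! : ℚ) := by
        rw [Finset.prod_Ico_eq_prod_range]
        have e2 : ∀ k ∈ Finset.range (b - ((j:ℕ)+1)),
            (((a+c:ℕ):ℚ) + (((j:ℕ)+1+k : ℕ):ℚ) - ((a:ℚ) + (i:ℕ)))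
              = (((c+(j:ℕ)-(i:ℕ)):ℕ):ℚ) + k + 1 := by
          intro k _
          have : ((c+(j:ℕ)-(i:ℕ) : ℕ) : ℚ) = (c:ℚ) + (j:ℕ) - (i:ℕ) := by
            push_cast [Nat.cast_sub hi]; ring
          rw [this]; push_cast; ring
        rw [Finset.prod_congr rfl e2, prod_add_range]
        have : c + (j:ℕ) - (i:ℕ) + (b - ((j:ℕ)+1)) = c + (b-1-(i:ℕ)) := by omega
        rw [this]
      rw [hp1, hp2]
      have hac : a + c - (a + (i:ℕ) - (j:ℕ)) = c + (j:ℕ) - (i:ℕ) := by omega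
      rw [hac]
      field_simp
    · -- zero case: c + j < i
      push_neg at hi
      have hb0 : (0:ℤ) ≤ (a:ℤ) + (i:ℕ) - (j:ℕ) := by omega
      have htn : ((a:ℤ) + (i:ℕ) - (j:ℕ)).toNat = a + (i:ℕ) - (j:ℕ) := by omega
      rw [binom, if_pos hb0, htn, Nat.choose_eq_zero_of_lt (by omega)]
      have hmem : (i:ℕ) - c ∈ Finset.Ico ((j:ℕ)+1) b := by
        rw [Finset.mem_Ico]; omega
      have hz : (((a+c:ℕ):ℚ) + ((i:ℕ)-c : ℕ) - ((a:ℚ) + (i:ℕ))) = 0 := by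
        push_cast [Nat.cast_sub (by omega : c ≤ (i:ℕ))]; ring
      rw [Finset.prod_eq_zero hmem hz, mul_zero, mul_zero, Nat.cast_zero]
  · -- zero case: a + i < j
    push_neg at hj
    rw [binom, if_neg (by omega)]
    have hmem : a + (i:ℕ) ∈ Finset.range (j:ℕ) := Finset.mem_range.2 hj
    have hz : ((a:ℚ) + (i:ℕ) - ((a+(i:ℕ) : ℕ):ℚ)) = 0 := by push_cast; ring
    rw [Finset.prod_eq_zero hmem hz, zero_mul, mul_zero, Nat.cast_zero]

/-- MacMahon's triple product, telescoped into a ratio of factorials. -/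
lemma macmahon (a b c : ℕ) :
    (∏ i ∈ Finset.range a, ∏ j ∈ Finset.range b, ∏ k ∈ Finset.range c,
        (((i : ℚ) + j + k + 2) / ((i : ℚ) + j + k + 1)))
      = ∏ j ∈ Finset.range b, (((a+c+j)! : ℚ) * ((j)! : ℚ)) / (((a+j)! : ℚ) * ((c+j)! : ℚ)) := by
  rw [Finset.prod_comm]
  refine Finset.prod_congr rfl fun j _ => ?_
  have step1 : ∀ i ∈ Finset.range a,
      (∏ k ∈ Finset.range c, (((i : ℚ) + j + k + 2) / ((i : ℚ) + j + k + 1)))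
        = ((i:ℚ) + j + c + 1) / ((i:ℚ) + j + 1) := by
    intro i _
    rw [Finset.prod_div_distrib]
    have h1 : ∏ k ∈ Finset.range c, ((i : ℚ) + j + k + 2)
        = ((i+j+1+c)! : ℚ) / ((i+j+1)! : ℚ) := by
      rw [← prod_add_range (i+j+1) c]
      refine Finset.prod_congr rfl fun k _ => by push_cast; ring
    have h2 : ∏ k ∈ Finset.range c, ((i : ℚ) + j + k + 1)
        = ((i+j+c)! : ℚ) / ((i+j)! : ℚ) := by
      rw [← prod_add_range (i+j) c]
      refine Finset.prod_congr rfl fun k _ => by push_cast; ring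
    rw [h1, h2, show i+j+1+c = (i+j+c)+1 by ring, Nat.factorial_succ (i+j+c),
      Nat.factorial_succ (i+j)]
    have n1 := fnz (i+j+c)
    have n2 := fnz (i+j)
    have n3 : ((i:ℚ)+j+1) ≠ 0 := by positivity
    push_cast
    field_simp
  rw [Finset.prod_congr rfl step1, Finset.prod_div_distrib]
  have h1 : ∏ i ∈ Finset.range a, ((i:ℚ) + j + c + 1) = ((j+c+a)! : ℚ) / ((j+c)! : ℚ) := by
    rw [← prod_add_range (j+c) a]
    refine Finset.prod_congr rfl fun i _ => by push_cast; ring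
  have h2 : ∏ i ∈ Finset.range a, ((i:ℚ) + j + 1) = ((j+a)! : ℚ) / ((j)! : ℚ) := by
    rw [← prod_add_range j a]
    refine Finset.prod_congr rfl fun i _ => by push_cast; ring
  rw [h1, h2, show j+c+a = a+c+j by ring, show j+a = a+j by ring, show j+c = c+j by ring]
  rw [div_div_div_eq]
  rw [div_eq_div_iff (by positivity) (by positivity)]
  ring

/-- The determinant of the `b × b` Carlitz matrix with entries `C(a+c), a+i-j)` equals
MacMahon's product `∏ (i+j+k+2)/(i+j+k+1)`. -/
theorem carlitz_det (a b c : ℕ) (hb : 1 ≤ b) :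
    (Matrix.of fun i j : Fin b =>
        (binom (a + c) ((a : ℤ) + (i : ℕ) - (j : ℕ)) : ℚ)).det =
      ∏ i ∈ Finset.range a, ∏ j ∈ Finset.range b, ∏ k ∈ Finset.range c,
        (((i : ℚ) + j + k + 2) / ((i : ℚ) + j + k + 1)) := by
  rw [macmahon]
  have hM : (Matrix.of fun i j : Fin b =>
      (binom (a + c) ((a : ℤ) + (i : ℕ) - (j : ℕ)) : ℚ))
      = Matrix.of (fun i j : Fin b =>
          (((a+c)! : ℚ) / (((a+(i:ℕ))! : ℚ) * ((c+(b-1-(i:ℕ)))! : ℚ)))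
            * (Matrix.of fun i j : Fin b =>
                (carlP (a+c) b (j:ℕ)).eval ((a:ℚ) + (i:ℕ))) i j) := by
    ext i j
    exact entry_eq a c b i j
  rw [hM, Matrix.det_mul_column, det_eval_shift, det_eval_id]
  rw [Fin.prod_univ_eq_prod_range
      (fun i => ((a+c)! : ℚ) / (((a+i)! : ℚ) * ((c+(b-1-i))! : ℚ))) b,
    Fin.prod_univ_eq_prod_range
      (fun i => ((i ! : ℕ) : ℚ) * ∏ t ∈ Finset.Ico (i+1) b, ((((a+c:ℕ)):ℚ) + t - i)) b]
  rw [← Finset.prod_mul_distrib]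
  have step : ∀ i ∈ Finset.range b,
      (((a+c)! : ℚ) / (((a+i)! : ℚ) * ((c+(b-1-i))! : ℚ)))
        * (((i ! : ℕ) : ℚ) * ∏ t ∈ Finset.Ico (i+1) b, ((((a+c:ℕ)):ℚ) + t - i))
      = ((i ! : ℕ) : ℚ) / ((a+i)! : ℚ) * (((a+c+(b-1-i))! : ℚ) / ((c+(b-1-i))! : ℚ)) := by
    intro i hi
    have hib : i < b := Finset.mem_range.1 hi
    have hico : ∏ t ∈ Finset.Ico (i+1) b, ((((a+c:ℕ)):ℚ) + t - i)
        = ((a+c+(b-1-i))! : ℚ) / ((a+c)! : ℚ) := by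
      rw [Finset.prod_Ico_eq_prod_range]
      have e : ∀ k ∈ Finset.range (b - (i+1)),
          ((((a+c:ℕ)):ℚ) + ((i+1+k : ℕ):ℚ) - i) = (((a+c):ℕ):ℚ) + k + 1 := by
        intro k _; push_cast; ring
      rw [Finset.prod_congr rfl e, prod_add_range,
        show a+c+(b-(i+1)) = a+c+(b-1-i) by omega]
    rw [hico]
    field_simp
  rw [Finset.prod_congr rfl step, Finset.prod_mul_distrib,
    Finset.prod_range_reflect (fun k => (((a+c+k)! : ℕ) : ℚ) / (((c+k)! : ℕ) : ℚ)) b,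
    ← Finset.prod_mul_distrib]
  refine Finset.prod_congr rfl fun j _ => ?_
  rw [_root_.div_mul_div_comm]
  ring
end

section
/- Let a, b be positive natural numbers and let M be the b×b integer matrix with entries M(i,j) = C(a+1, a+i-j) for 0 ≤ i,j < b, with the convention C(n,k) = 0 when k < 0 or k > n. Then the cokernel ℤ^b / (M · ℤ^b) (the quotient of ℤ^b by the subgroup generated by the columns of M) is a cyclic group, isomorphic to ℤ/C(a+b, a)ℤ. -/
set_option maxRecDepth 10000
set_option maxHeartbeats 1000000

open Polynomial Finset

theorem coeff_one_sub_X_pow (n p : ℕ) :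
    ((1 - X : ℤ[X])^n).coeff p = (-1)^p * n.choose p := by
  have h : (1 - X : ℤ[X]) = -X + 1 := by ring
  rw [h, add_pow, finset_sum_coeff]
  have hterm : ∀ k : ℕ, ((-X : ℤ[X]) ^ k * 1 ^ (n - k) * (n.choose k : ℤ[X])).coeff p
      = (if k = p then (-1)^p * (n.choose k : ℤ) else 0) := by
    intro k
    have he : ((-X : ℤ[X]) ^ k * 1 ^ (n - k) * (n.choose k : ℤ[X]))
        = C ((-1)^k * (n.choose k : ℤ)) * X ^ k := by
      rw [neg_pow, one_pow, mul_one, C_mul, C_pow, C_eq_natCast, map_neg, C_1]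
      ring
    rw [he, coeff_C_mul, coeff_X_pow]
    split_ifs with h1 h2 h2
    · rw [h1]; ring
    · exact absurd h1.symm h2
    · exact absurd h2.symm h1
    · ring
  rw [Finset.sum_congr rfl fun k _ => hterm k]
  rw [Finset.sum_ite_eq' (Finset.range (n+1)) p]
  split_ifs with h1
  · rfl
  · rw [Finset.mem_range, not_lt] at h1
    rw [Nat.choose_eq_zero_of_lt h1]
    simp

open PowerSeries in
theorem KI (a m : ℕ) : ∑ x ∈ Finset.HasAntidiagonal.antidiagonal m,
    ((-1)^x.1 * ((a+1).choose x.1 : ℤ)) * ((a + x.2).choose a : ℤ)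
    = if m = 0 then 1 else 0 := by
  have h1 : ((1 - PowerSeries.X : ℤ⟦X⟧)^(a+1)) * (invOneSubPow ℤ (a+1)).val = 1 := by
    rw [← invOneSubPow_inv_eq_one_sub_pow]
    exact (invOneSubPow ℤ (a+1)).inv_val
  have h2 := congrArg (PowerSeries.coeff (R := ℤ) m) h1
  rw [PowerSeries.coeff_mul, PowerSeries.coeff_one] at h2
  rw [← h2]
  apply Finset.sum_congr rfl
  intro x _
  congr 1
  · have : (((1 - Polynomial.X : ℤ[X])^(a+1) : ℤ[X]) : ℤ⟦X⟧) = ((1 - PowerSeries.X : ℤ⟦X⟧)^(a+1)) := by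
      rw [Polynomial.coe_pow, Polynomial.coe_sub, Polynomial.coe_one, Polynomial.coe_X]
    rw [← this, Polynomial.coeff_coe, coeff_one_sub_X_pow]
  · rw [invOneSubPow_val_succ_eq_mk_add_choose, PowerSeries.coeff_mk]

theorem lemA (a j : ℕ) : ∑ i ∈ Finset.range (j+2),
    (-1:ℤ)^i * ((a+1).choose (j+1-i) : ℤ) * ((a+i).choose a : ℤ) = 0 := by
  have hKI := KI a (j+1)
  rw [Finset.Nat.sum_antidiagonal_eq_sum_range_succ_mk] at hKI
  rw [if_neg (Nat.succ_ne_zero j)] at hKI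
  rw [← Finset.sum_range_reflect]
  have : ∀ p ∈ Finset.range (j+2),
      (-1:ℤ)^(j+2-1-p) * ((a+1).choose (j+1-(j+2-1-p)) : ℤ) * ((a+(j+2-1-p)).choose a : ℤ)
      = (-1:ℤ)^(j+1) * ((-1:ℤ)^p * ((a+1).choose p : ℤ) * ((a+(j+1-p)).choose a : ℤ)) := by
    intro p hp
    rw [Finset.mem_range] at hp
    have hp' : p ≤ j + 1 := Nat.lt_succ_iff.mp hp
    have h1 : j + 2 - 1 - p = j + 1 - p := by omega
    rw [h1, Nat.sub_sub_self hp']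
    have hsign : (-1:ℤ)^(j+1-p) = (-1:ℤ)^(j+1) * (-1:ℤ)^p := by
      have h2 : (-1:ℤ)^(j+1-p) * (-1:ℤ)^p = (-1:ℤ)^(j+1) := by
        rw [← pow_add, Nat.sub_add_cancel hp']
      have h3 : (-1:ℤ)^p * (-1:ℤ)^p = 1 := by
        rw [← pow_add, ← two_mul, pow_mul]; norm_num
      calc (-1:ℤ)^(j+1-p) = (-1:ℤ)^(j+1-p) * ((-1:ℤ)^p * (-1:ℤ)^p) := by rw [h3, mul_one]
        _ = ((-1:ℤ)^(j+1-p) * (-1:ℤ)^p) * (-1:ℤ)^p := by ring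
        _ = (-1:ℤ)^(j+1) * (-1:ℤ)^p := by rw [h2]
    rw [hsign]; ring
  rw [Finset.sum_congr rfl this, ← Finset.mul_sum]
  have : ∑ p ∈ Finset.range (j+2), ((-1:ℤ)^p * ((a+1).choose p : ℤ) * ((a+(j+1-p)).choose a : ℤ)) = 0 := by
    simpa using hKI
  rw [this, mul_zero]

theorem binom_eq (a i j : ℕ) (hij : i ≤ j + 1) :
    (binom (a+1) ((a:ℤ) + i - j) : ℤ) = ((a+1).choose (j+1-i) : ℤ) := by
  rcases le_or_gt j (a+i) with h | h
  · have h0 : (0:ℤ) ≤ (a:ℤ) + i - j := by omega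
    rw [binom, if_pos h0]
    have ht : ((a:ℤ) + i - j).toNat = a + i - j := by omega
    rw [ht]
    have h1 : j + 1 - i ≤ a + 1 := by omega
    have h2 : a + 1 - (j + 1 - i) = a + i - j := by omega
    rw [← h2, Nat.choose_symm h1]
  · have h0 : ¬ (0:ℤ) ≤ (a:ℤ) + i - j := by omega
    rw [binom, if_neg h0]
    rw [Nat.choose_eq_zero_of_lt (by omega : a + 1 < j + 1 - i)]

theorem binom_zero (a i j : ℕ) (h : j + 1 < i) :
    (binom (a+1) ((a:ℤ) + i - j) : ℤ) = 0 := by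
  have h0 : (0:ℤ) ≤ (a:ℤ) + i - j := by omega
  rw [binom, if_pos h0]
  have ht : ((a:ℤ) + i - j).toNat = a + i - j := by omega
  rw [ht, Nat.choose_eq_zero_of_lt (by omega : a + 1 < a + i - j)]
  simp

theorem colsum (a b j : ℕ) (hj : j < b) :
    ∑ i ∈ Finset.range b, (binom (a+1) ((a:ℤ) + i - j) : ℤ) * ((-1:ℤ)^i * ((a+i).choose a : ℤ))
    = if j + 1 = b then (-1:ℤ)^(b-1) * ((a+b).choose a : ℤ) else 0 := by
  rcases eq_or_lt_of_le (Nat.succ_le_of_lt hj) with hb | hb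
  · -- j + 1 = b
    rw [if_pos hb, ← hb]
    have hsum : ∑ i ∈ Finset.range (j+1), (binom (a+1) ((a:ℤ) + i - j) : ℤ) * ((-1:ℤ)^i * ((a+i).choose a : ℤ))
        = ∑ i ∈ Finset.range (j+1), (-1:ℤ)^i * ((a+1).choose (j+1-i) : ℤ) * ((a+i).choose a : ℤ) := by
      apply Finset.sum_congr rfl
      intro i hi
      rw [Finset.mem_range] at hi
      rw [binom_eq a i j (by omega)]
      ring
    have hA := lemA a j
    rw [Finset.sum_range_succ, Nat.sub_self, Nat.choose_zero_right] at hA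
    have hp : (-1:ℤ)^(j+1) = -(-1:ℤ)^j := by rw [pow_succ]; ring
    rw [hp] at hA
    have hj1 : j.succ - 1 = j := rfl
    rw [hj1]
    show ∑ i ∈ Finset.range (j+1), (binom (a+1) ((a:ℤ) + i - j) : ℤ) * ((-1:ℤ)^i * ((a+i).choose a : ℤ))
      = (-1:ℤ)^j * ((a+(j+1)).choose a : ℤ)
    rw [hsum]
    push_cast at hA ⊢
    linarith
  · -- j + 1 < b
    rw [if_neg (by omega)]
    rw [← Finset.sum_subset (Finset.range_subset_range.mpr (by omega : j + 2 ≤ b))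
      (fun i _ hi => by
        rw [Finset.mem_range, not_lt] at hi
        rw [binom_zero a i j (by omega), zero_mul])]
    rw [← lemA a j]
    apply Finset.sum_congr rfl
    intro i hi
    rw [Finset.mem_range] at hi
    rw [binom_eq a i j (by omega)]
    ring

noncomputable section CarlitzAux

/-- sign-alternating binomial coefficients -/
def cta (a i : ℕ) : ℤ := (-1)^i * ((a + i).choose a : ℤ)

/-- the Carlitz matrix -/
def Mab (a b : ℕ) : Matrix (Fin b) (Fin b) ℤ :=
  Matrix.of fun i j : Fin b => (binom (a + 1) ((a : ℤ) + (i : ℕ) - (j : ℕ)) : ℤ)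

theorem hcol (a b : ℕ) (j : Fin b) :
    ∑ i : Fin b, Mab a b i j * cta a (i : ℕ)
      = if (j : ℕ) + 1 = b then (-1:ℤ)^(b-1) * ((a+b).choose a : ℤ) else 0 := by
  have hterm : ∀ i : Fin b, Mab a b i j * cta a (i : ℕ)
      = (fun t : ℕ => (binom (a+1) ((a:ℤ) + t - (j:ℕ)) : ℤ)
          * ((-1:ℤ)^t * ((a+t).choose a : ℤ))) (i : ℕ) := fun i => rfl
  rw [Finset.sum_congr rfl (fun i _ => hterm i)]
  exact (Fin.sum_univ_eq_sum_range _ b).trans (colsum a b (j : ℕ) j.isLt)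

def uvec (a b : ℕ) [NeZero b] (i : Fin b) : Fin b → ℤ :=
  Pi.single i 1 - cta a (i : ℕ) • Pi.single (0 : Fin b) 1

theorem sumU (a b : ℕ) [NeZero b] (w : Fin b → ℤ) :
    ∑ i : Fin b, w i • uvec a b i
      = w - (∑ i : Fin b, w i * cta a (i : ℕ)) • Pi.single (0 : Fin b) 1 := by
  have h1 : ∑ i : Fin b, w i • (Pi.single i 1 : Fin b → ℤ) = w := by
    have h : ∀ i : Fin b, w i • (Pi.single i 1 : Fin b → ℤ) = Pi.single i (w i) := by
      intro i; funext t; simp [Pi.single_apply, mul_ite]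
    rw [Finset.sum_congr rfl (fun i _ => h i), Finset.univ_sum_single]
  calc ∑ i : Fin b, w i • uvec a b i
      = ∑ i : Fin b, (w i • (Pi.single i 1 : Fin b → ℤ)
          - (w i * cta a (i : ℕ)) • (Pi.single (0 : Fin b) 1 : Fin b → ℤ)) := by
        refine Finset.sum_congr rfl fun i _ => ?_
        rw [uvec, smul_sub, smul_smul]
    _ = (∑ i : Fin b, w i • (Pi.single i 1 : Fin b → ℤ))
          - ∑ i : Fin b, (w i * cta a (i : ℕ)) • (Pi.single (0 : Fin b) 1 : Fin b → ℤ) :=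
        Finset.sum_sub_distrib _ _
    _ = w - (∑ i : Fin b, w i * cta a (i : ℕ)) • Pi.single (0 : Fin b) 1 := by
        rw [h1, Finset.sum_smul]

theorem uvec_mem (a b : ℕ) [NeZero b] :
    ∀ m : ℕ, ∀ hm : m < b,
      uvec a b ⟨m, hm⟩ ∈ LinearMap.range (Matrix.toLin' (Mab a b)) := by
  intro m
  induction m using Nat.strong_induction_on with
  | _ m IH =>
    intro hm
    match m, IH, hm with
    | 0, IH, hm =>
      have h0 : (⟨0, hm⟩ : Fin b) = 0 := by ext; simp
      have : uvec a b ⟨0, hm⟩ = 0 := by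
        rw [uvec, h0]
        have : cta a ((0 : Fin b) : ℕ) = 1 := by simp [cta]
        rw [this, one_smul, sub_self]
      rw [this]; exact zero_mem _
    | (k+1), IH, hm =>
      have hkb : k < b := by omega
      set J : Fin b := ⟨k, hkb⟩ with hJ
      set K : Fin b := ⟨k+1, hm⟩ with hK
      have hcolJ := hcol a b J
      rw [if_neg (by simp only [hJ]; omega)] at hcolJ
      have hsum := sumU a b (fun i => Mab a b i J)
      rw [hcolJ, zero_smul, sub_zero] at hsum
      have hKJ : Mab a b K J = 1 := by
        show (binom (a+1) ((a:ℤ) + ((k+1 : ℕ) : ℤ) - (k : ℕ)) : ℤ) = 1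
        have h1 : (a:ℤ) + ((k+1 : ℕ) : ℤ) - (k : ℕ) = ((a+1 : ℕ) : ℤ) := by push_cast; ring
        rw [h1, binom, if_pos (by positivity)]
        simp
      have hexpr : uvec a b K = (fun i => Mab a b i J)
          - ∑ i ∈ Finset.univ.erase K, Mab a b i J • uvec a b i := by
        rw [← hsum, ← Finset.add_sum_erase _ _ (Finset.mem_univ K), hKJ, one_smul]
        abel
      rw [hexpr]
      apply sub_mem
      · refine ⟨Pi.single J 1, ?_⟩
        rw [Matrix.toLin'_apply, Matrix.mulVec_single]
        funext i; exact mul_one _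
      · apply sum_mem
        intro i hi
        have hne : (i : ℕ) ≠ k + 1 := by
          intro h
          exact (Finset.ne_of_mem_erase hi) (Fin.ext (h.trans rfl))
        rcases lt_or_gt_of_ne hne with hlt | hgt
        · have := IH (i : ℕ) (by omega) i.isLt
          rw [Fin.eta] at this
          exact Submodule.smul_mem _ _ this
        · have hz : Mab a b i J = 0 := by
            show (binom (a+1) ((a:ℤ) + (i:ℕ) - (k:ℕ)) : ℤ) = 0
            exact binom_zero a (i:ℕ) k (by omega)
          rw [hz, zero_smul]
          exact zero_mem _

theorem lastcol_mem (a b : ℕ) [NeZero b] (hb : 1 ≤ b) :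
    (((a+b).choose a : ℤ)) • (Pi.single (0 : Fin b) 1 : Fin b → ℤ)
      ∈ LinearMap.range (Matrix.toLin' (Mab a b)) := by
  set J : Fin b := ⟨b-1, by omega⟩ with hJ
  have hcolJ := hcol a b J
  rw [if_pos (by simp only [hJ]; omega)] at hcolJ
  have hsum := sumU a b (fun i => Mab a b i J)
  rw [hcolJ] at hsum
  have h1 : ((-1:ℤ)^(b-1) * ((a+b).choose a : ℤ)) • (Pi.single (0 : Fin b) 1 : Fin b → ℤ)
      = (fun i => Mab a b i J) - ∑ i : Fin b, Mab a b i J • uvec a b i := by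
    rw [hsum]; abel
  have h2 : ((-1:ℤ)^(b-1) * ((a+b).choose a : ℤ)) • (Pi.single (0 : Fin b) 1 : Fin b → ℤ)
      ∈ LinearMap.range (Matrix.toLin' (Mab a b)) := by
    rw [h1]
    apply sub_mem
    · refine ⟨Pi.single J 1, ?_⟩
      rw [Matrix.toLin'_apply, Matrix.mulVec_single]
      funext i; exact mul_one _
    · apply sum_mem
      intro i _
      have := uvec_mem a b (i : ℕ) i.isLt
      rw [Fin.eta] at this
      exact Submodule.smul_mem _ _ this
  have h3 := Submodule.smul_mem _ ((-1:ℤ)^(b-1)) h2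
  rw [smul_smul] at h3
  have hsq : (-1:ℤ)^(b-1) * ((-1:ℤ)^(b-1) * ((a+b).choose a : ℤ)) = ((a+b).choose a : ℤ) := by
    rw [← mul_assoc, ← pow_add, ← two_mul, pow_mul]
    norm_num
  rwa [hsq] at h3

/-- the linear functional with coefficients `cta` -/
def phi0 (a b : ℕ) : (Fin b → ℤ) →ₗ[ℤ] ℤ := ∑ i : Fin b, cta a (i : ℕ) • LinearMap.proj i

theorem phi0_apply (a b : ℕ) (x : Fin b → ℤ) :
    phi0 a b x = ∑ i : Fin b, cta a (i : ℕ) * x i := by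
  simp [phi0]

end CarlitzAux

/-- The cokernel `ℤ^b / M ℤ^b` of the `b × b` Carlitz matrix `M(i,j) = C(a+1, a+i-j)`
(the case `c = 1`) is cyclic, isomorphic to `ℤ/C(a+b, a)ℤ`. -/
theorem carlitz_cokernel_cyclic (a b : ℕ) (ha : 1 ≤ a) (hb : 1 ≤ b) :
    IsAddCyclic ((Fin b → ℤ) ⧸ LinearMap.range (Matrix.toLin'
        (Matrix.of fun i j : Fin b => (binom (a + 1) ((a : ℤ) + (i : ℕ) - (j : ℕ)) : ℤ)))) ∧
      Nonempty (((Fin b → ℤ) ⧸ LinearMap.range (Matrix.toLin'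
        (Matrix.of fun i j : Fin b => (binom (a + 1) ((a : ℤ) + (i : ℕ) - (j : ℕ)) : ℤ))))
        ≃+ ZMod ((a + b).choose a)) := by
  haveI : NeZero b := ⟨by omega⟩
  have hMe : (Matrix.of fun i j : Fin b =>
      (binom (a + 1) ((a : ℤ) + (i : ℕ) - (j : ℕ)) : ℤ)) = Mab a b := rfl
  rw [hMe]
  set n := (a + b).choose a with hn
  set φ : (Fin b → ℤ) →ₗ[ℤ] ZMod n :=
    (LinearMap.toSpanSingleton ℤ (ZMod n) 1).comp (phi0 a b) with hφdef
  have hφ : ∀ x : Fin b → ℤ, φ x = ((phi0 a b x : ℤ) : ZMod n) := by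
    intro x
    show (LinearMap.toSpanSingleton ℤ (ZMod n) 1) (phi0 a b x) = _
    rw [LinearMap.toSpanSingleton_apply, zsmul_eq_mul, mul_one]
  have hZ : ∀ j : Fin b, ((∑ i : Fin b, Mab a b i j * cta a (i : ℕ) : ℤ) : ZMod n) = 0 := by
    intro j
    rw [hcol a b j]
    split_ifs with h
    · push_cast [ZMod.natCast_self]
      ring
    · exact Int.cast_zero
  have hker : LinearMap.ker φ = LinearMap.range (Matrix.toLin' (Mab a b)) := by
    apply le_antisymm
    · intro x hx
      rw [LinearMap.mem_ker, hφ, ZMod.intCast_zmod_eq_zero_iff_dvd] at hx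
      obtain ⟨k, hk⟩ := hx
      have hsx := sumU a b x
      rw [phi0_apply] at hk
      have hcomm : ∀ i : Fin b, cta a (i : ℕ) * x i = x i * cta a (i : ℕ) :=
        fun i => mul_comm _ _
      rw [Finset.sum_congr rfl (fun i _ => hcomm i)] at hk
      rw [hk] at hsx
      have hx2 : x = ∑ i : Fin b, x i • uvec a b i
          + k • (((n : ℤ)) • (Pi.single (0 : Fin b) 1 : Fin b → ℤ)) := by
        rw [hsx, smul_smul, mul_comm (k : ℤ) (n : ℤ)]
        exact (sub_add_cancel x _).symm
      rw [hx2]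
      refine add_mem (sum_mem fun i _ => ?_) (Submodule.smul_mem _ _ (lastcol_mem a b hb))
      have := uvec_mem a b (i : ℕ) i.isLt
      rw [Fin.eta] at this
      exact Submodule.smul_mem _ _ this
    · rintro x ⟨y, rfl⟩
      rw [LinearMap.mem_ker, hφ, Matrix.toLin'_apply]
      have hmv : phi0 a b ((Mab a b).mulVec y)
          = ∑ j : Fin b, (∑ i : Fin b, Mab a b i j * cta a (i : ℕ)) * y j := by
        rw [phi0_apply]
        have h1 : ∀ i : Fin b, cta a (i : ℕ) * ((Mab a b).mulVec y) i
            = ∑ j : Fin b, (Mab a b i j * cta a (i : ℕ)) * y j := by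
          intro i
          have : ((Mab a b).mulVec y) i = ∑ j : Fin b, Mab a b i j * y j := rfl
          rw [this, Finset.mul_sum]
          exact Finset.sum_congr rfl fun j _ => by ring
        rw [Finset.sum_congr rfl (fun i _ => h1 i), Finset.sum_comm]
        exact Finset.sum_congr rfl fun j _ => (Finset.sum_mul _ _ _).symm
      rw [hmv, Int.cast_sum]
      refine Finset.sum_eq_zero fun j _ => ?_
      rw [Int.cast_mul, hZ j, zero_mul]
  have hsurj : Function.Surjective φ := by
    intro z
    obtain ⟨m, rfl⟩ := ZMod.intCast_surjective z
    refine ⟨m • (Pi.single (0 : Fin b) 1 : Fin b → ℤ), ?_⟩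
    rw [hφ, map_smul, smul_eq_mul]
    have h0 : phi0 a b (Pi.single (0 : Fin b) 1 : Fin b → ℤ) = 1 := by
      rw [phi0_apply]
      rw [Finset.sum_eq_single (0 : Fin b)]
      · simp [cta]
      · intro i _ hi
        rw [Pi.single_apply, if_neg (by exact fun h => hi (by rw [h])), mul_zero]
      · intro h; exact absurd (Finset.mem_univ _) h
    rw [h0, mul_one]
  let e : ((Fin b → ℤ) ⧸ LinearMap.range (Matrix.toLin' (Mab a b))) ≃ₗ[ℤ] ZMod n :=
    (Submodule.quotEquivOfEq _ _ hker.symm).trans (φ.quotKerEquivOfSurjective hsurj)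
  constructor
  · exact isAddCyclic_of_surjective e.symm.toLinearMap.toAddMonoidHom e.symm.surjective
  · exact ⟨e.toAddEquiv⟩
end

section
/- Let n ≥ 1 and let H(n,n,n) be the regular hexagon of side n, and let T(n) be its number of lozenge tilings. For a lozenge tiling T, consider the lozenges of T of the fixed orientation {U(i,j), D(i,j)}, and assign such a lozenge the coordinate x = i + j - (2n-1). Then the total 'moment of inertia' about the vertical axis satisfies: Σ_{T lozenge tiling of H(n,n,n)} Σ_{(i,j) with {U(i,j),D(i,j)} ∈ T} (i + j - (2n-1))² = T(n) · (n⁴ - n²)/6. -/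
/-- Unit triangles of the triangular lattice: `(true, i, j)` is the upward triangle
`U(i,j)`, and `(false, i, j)` is the downward triangle `D(i,j)`. -/
abbrev Tri : Type := Bool × ℤ × ℤ

/-- The upward triangle `U(u)` shares an edge with exactly the downward triangles
`D(u)`, `D(u.1 - 1, u.2)`, `D(u.1, u.2 - 1)`. -/
def SharesEdge (u d : ℤ × ℤ) : Prop :=
  d = u ∨ d = (u.1 - 1, u.2) ∨ d = (u.1, u.2 - 1)

/-- A lozenge: a two-element block consisting of one upward and one downward triangle
sharing an edge. -/
def IsLozenge (B : Set Tri) : Prop :=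
  ∃ u d : ℤ × ℤ, SharesEdge u d ∧ B = {(true, u), (false, d)}

/-- A lozenge tiling of a set `R` of unit triangles: a partition of `R` into lozenges. -/
def IsLozengeTiling (R : Set Tri) (T : Set (Set Tri)) : Prop :=
  (∀ B ∈ T, IsLozenge B) ∧ (∀ B ∈ T, B ⊆ R) ∧ ∀ x ∈ R, ∃! B, B ∈ T ∧ x ∈ B

/-- The regular hexagon `H(n,n,n)` of side `n`. -/
def Hexagon (n : ℕ) : Set Tri :=
  {x | (x.1 = true ∧ 0 ≤ x.2.1 ∧ 0 ≤ x.2.2 ∧ (n : ℤ) ≤ x.2.1 + x.2.2 ∧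
          x.2.1 + x.2.2 ≤ 3 * (n : ℤ) - 1 ∧ x.2.1 ≤ 2 * (n : ℤ) - 1 ∧
          x.2.2 ≤ 2 * (n : ℤ) - 1) ∨
       (x.1 = false ∧ 0 ≤ x.2.1 ∧ 0 ≤ x.2.2 ∧ (n : ℤ) - 1 ≤ x.2.1 + x.2.2 ∧
          x.2.1 + x.2.2 ≤ 3 * (n : ℤ) - 2 ∧ x.2.1 ≤ 2 * (n : ℤ) - 1 ∧
          x.2.2 ≤ 2 * (n : ℤ) - 1)}

namespace MoI

open Finset

/-- The telescoping weight. -/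
def g (n : ℕ) (c : ℤ) : ℚ :=
  -((((c : ℚ) - (2 * n - 1)) - 1) * ((c : ℚ) - (2 * n - 1)) *
      (2 * ((c : ℚ) - (2 * n - 1)) - 1) / 6)

/-- The weight of a triangle. -/
def f (n : ℕ) (x : Tri) : ℚ :=
  if x.1 then g n (x.2.1 + x.2.2) else -g n (x.2.1 + x.2.2 + 1)

lemma block_sum (n : ℕ) (u d : ℤ × ℤ) (h : SharesEdge u d) :
    f n (true, u) + f n (false, d) =
      if d = u then (((u.1 + u.2 - (2 * (n : ℤ) - 1)) ^ 2 : ℤ) : ℚ) else 0 := by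
  rcases h with rfl | rfl | rfl
  · rw [if_pos rfl]
    simp only [f, g]
    push_cast
    ring
  · rw [if_neg (by simp [Prod.ext_iff])]
    simp only [f, g]
    push_cast
    ring
  · rw [if_neg (by simp [Prod.ext_iff])]
    simp only [f, g]
    push_cast
    ring

noncomputable def square (n : ℕ) : Finset (ℤ × ℤ) := Icc 0 (2 * (n : ℤ) - 1) ×ˢ Icc 0 (2 * (n : ℤ) - 1)

noncomputable def hexU (n : ℕ) : Finset (ℤ × ℤ) :=
  (square n).filter (fun p => (n : ℤ) ≤ p.1 + p.2 ∧ p.1 + p.2 ≤ 3 * (n : ℤ) - 1)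

noncomputable def hexD (n : ℕ) : Finset (ℤ × ℤ) :=
  (square n).filter (fun p => (n : ℤ) - 1 ≤ p.1 + p.2 ∧ p.1 + p.2 ≤ 3 * (n : ℤ) - 2)

noncomputable def hexF (n : ℕ) : Finset Tri :=
  (hexU n).image (fun p => (true, p)) ∪ (hexD n).image (fun p => (false, p))

lemma mem_hexU {n : ℕ} {p : ℤ × ℤ} : p ∈ hexU n ↔ ((true, p) : Tri) ∈ Hexagon n := by
  simp [hexU, square, Hexagon, Finset.mem_filter, Finset.mem_product, Finset.mem_Icc]
  tauto

lemma mem_hexD {n : ℕ} {p : ℤ × ℤ} : p ∈ hexD n ↔ ((false, p) : Tri) ∈ Hexagon n := by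
  simp [hexD, square, Hexagon, Finset.mem_filter, Finset.mem_product, Finset.mem_Icc]
  tauto

lemma mem_hexF {n : ℕ} {x : Tri} : x ∈ hexF n ↔ x ∈ Hexagon n := by
  obtain ⟨b, p⟩ := x
  cases b
  · simpa [hexF] using mem_hexD (n := n) (p := p)
  · simpa [hexF] using mem_hexU (n := n) (p := p)

open scoped Classical in
noncomputable def uof (B : Set Tri) : ℤ × ℤ :=
  if h : IsLozenge B then h.choose else 0

open scoped Classical in
noncomputable def dof (B : Set Tri) : ℤ × ℤ :=
  if h : IsLozenge B then h.choose_spec.choose else 0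

lemma uof_spec {B : Set Tri} (h : IsLozenge B) :
    SharesEdge (uof B) (dof B) ∧ B = {((true, uof B) : Tri), (false, dof B)} := by
  rw [uof, dof, dif_pos h, dif_pos h]
  exact ⟨h.choose_spec.choose_spec.1, h.choose_spec.choose_spec.2⟩

lemma rep_unique {u d u' d' : ℤ × ℤ}
    (h : ({((true, u) : Tri), (false, d)} : Set Tri) = {(true, u'), (false, d')}) :
    u = u' ∧ d = d' := by
  constructor
  · have h1 : ((true, u) : Tri) ∈ ({((true, u') : Tri), (false, d')} : Set Tri) := by
      rw [← h]; exact Set.mem_insert _ _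
    simpa [Prod.ext_iff] using h1
  · have h2 : ((false, d) : Tri) ∈ ({((true, u') : Tri), (false, d')} : Set Tri) := by
      rw [← h]; exact Set.mem_insert_of_mem _ rfl
    simpa [Prod.ext_iff] using h2

lemma tiling_moment (n : ℕ) (T : Set (Set Tri)) (hT : IsLozengeTiling (Hexagon n) T) :
    (∑ᶠ p ∈ {p : ℤ × ℤ | ({(true, p), (false, p)} : Set Tri) ∈ T},
        (((p.1 + p.2 - (2 * (n : ℤ) - 1)) ^ 2 : ℤ) : ℚ)) = ∑ x ∈ hexF n, f n x := by
  classical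
  obtain ⟨hloz, hsub, huniq⟩ := hT
  have huniq' : ∀ x ∈ Hexagon n, ∀ B ∈ T, ∀ B' ∈ T, x ∈ B → x ∈ B' → B = B' := by
    intro x hx B hB B' hB' h1 h2
    obtain ⟨C, _, hC⟩ := huniq x hx
    rw [hC B ⟨hB, h1⟩, hC B' ⟨hB', h2⟩]
  have hBrep : ∀ B ∈ T, B = {((true, uof B) : Tri), (false, dof B)} :=
    fun B hB => (uof_spec (hloz B hB)).2
  have hBedge : ∀ B ∈ T, SharesEdge (uof B) (dof B) := fun B hB => (uof_spec (hloz B hB)).1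
  have htrue : ∀ B ∈ T, ((true, uof B) : Tri) ∈ B := by
    intro B hB
    have h : ((true, uof B) : Tri) ∈ ({((true, uof B) : Tri), (false, dof B)} : Set Tri) :=
      Set.mem_insert _ _
    rw [← hBrep B hB] at h
    exact h
  -- T is finite
  have hTfin : T.Finite := by
    apply Set.Finite.of_finite_image (f := uof)
    · apply Set.Finite.subset ((hexU n).finite_toSet)
      rintro q ⟨B, hB, rfl⟩
      exact Finset.mem_coe.mpr (mem_hexU.mpr (hsub B hB (htrue B hB)))
    · intro B hB B' hB' heq
      have h1 : ((true, uof B) : Tri) ∈ B' := by rw [heq]; exact htrue B' hB'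
      exact huniq' _ (hsub B hB (htrue B hB)) B hB B' hB' (htrue B hB) h1
  set Tf := hTfin.toFinset with hTfdef
  have hmemTf : ∀ B, B ∈ Tf ↔ B ∈ T := fun B => hTfin.mem_toFinset
  -- the finset version of each block
  set bf : Set Tri → Finset Tri := fun B => {((true, uof B) : Tri), (false, dof B)} with hbfdef
  have hbf : ∀ B ∈ T, ↑(bf B) = B := by
    intro B hB
    simp only [hbfdef]
    rw [Finset.coe_insert, Finset.coe_singleton, ← hBrep B hB]
  -- the set of vertical-lozenge positions
  set Pset : Set (ℤ × ℤ) := {p : ℤ × ℤ | ({(true, p), (false, p)} : Set Tri) ∈ T} with hPdef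
  have hPsub : Pset ⊆ ↑(hexU n) := by
    intro p hp
    have : ((true, p) : Tri) ∈ Hexagon n :=
      hsub _ hp (Set.mem_insert _ _)
    exact Finset.mem_coe.mpr (mem_hexU.mpr this)
  have hPfin : Pset.Finite := ((hexU n).finite_toSet).subset hPsub
  have hPcoe : Pset = ↑hPfin.toFinset := (Set.Finite.coe_toFinset hPfin).symm
  rw [hPcoe, finsum_mem_coe_finset]
  -- decompose the hexagon sum over blocks
  have hbiU : hexF n = Tf.biUnion bf := by
    ext x
    rw [Finset.mem_biUnion]
    constructor
    · intro hx
      obtain ⟨B, ⟨hBT, hxB⟩, _⟩ := huniq x (mem_hexF.mp hx)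
      exact ⟨B, (hmemTf B).mpr hBT, by rw [← Finset.mem_coe, hbf B hBT]; exact hxB⟩
    · rintro ⟨B, hBT, hxB⟩
      have hBT' := (hmemTf B).mp hBT
      have : x ∈ B := by rw [← hbf B hBT']; exact hxB
      exact mem_hexF.mpr (hsub B hBT' this)
  have hdisj : (↑Tf : Set (Set Tri)).PairwiseDisjoint bf := by
    intro B hB B' hB' hne
    have hBT := (hmemTf B).mp (Finset.mem_coe.mp hB)
    have hBT' := (hmemTf B').mp (Finset.mem_coe.mp hB')
    simp only [Function.onFun, Finset.disjoint_left]
    intro x hxB hxB'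
    have h1 : x ∈ B := by rw [← hbf B hBT]; exact hxB
    have h2 : x ∈ B' := by rw [← hbf B' hBT']; exact hxB'
    exact hne (huniq' x (hsub B hBT h1) B hBT B' hBT' h1 h2)
  rw [hbiU, Finset.sum_biUnion hdisj]
  -- evaluate each block sum
  have hblock : ∀ B ∈ Tf, ∑ x ∈ bf B, f n x =
      if dof B = uof B then
        ((((uof B).1 + (uof B).2 - (2 * (n : ℤ) - 1)) ^ 2 : ℤ) : ℚ) else 0 := by
    intro B hB
    have : ∑ x ∈ bf B, f n x = f n (true, uof B) + f n (false, dof B) :=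
      Finset.sum_pair (by simp)
    rw [this, block_sum n _ _ (hBedge B ((hmemTf B).mp hB))]
  rw [Finset.sum_congr rfl hblock, ← Finset.sum_filter]
  -- bijection between vertical blocks and their positions
  apply Finset.sum_nbij' (i := fun p => ({(true, p), (false, p)} : Set Tri)) (j := uof)
  · intro p hp
    have hpT : ({((true, p) : Tri), (false, p)} : Set Tri) ∈ T :=
      hPfin.mem_toFinset.mp hp
    have hrep := (rep_unique (hBrep _ hpT)).1.symm.trans (rep_unique (hBrep _ hpT)).2
    rw [Finset.mem_filter]
    exact ⟨(hmemTf _).mpr hpT, hrep.symm⟩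
  · intro B hB
    rw [Finset.mem_filter] at hB
    obtain ⟨hBTf, hvert⟩ := hB
    have hBT := (hmemTf B).mp hBTf
    apply hPfin.mem_toFinset.mpr
    show ({((true, uof B) : Tri), (false, uof B)} : Set Tri) ∈ T
    rw [show ({((true, uof B) : Tri), (false, uof B)} : Set Tri)
        = {(true, uof B), (false, dof B)} by rw [hvert], ← hBrep B hBT]
    exact hBT
  · intro p hp
    have hpT : ({((true, p) : Tri), (false, p)} : Set Tri) ∈ T :=
      hPfin.mem_toFinset.mp hp
    exact (rep_unique (hBrep _ hpT)).1.symm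
  · intro B hB
    rw [Finset.mem_filter] at hB
    obtain ⟨hBTf, hvert⟩ := hB
    have hBT := (hmemTf B).mp hBTf
    rw [show ({((true, uof B) : Tri), (false, uof B)} : Set Tri)
        = {(true, uof B), (false, dof B)} by rw [hvert], ← hBrep B hBT]
  · intro p hp
    have hpT : ({((true, p) : Tri), (false, p)} : Set Tri) ∈ T :=
      hPfin.mem_toFinset.mp hp
    have h1 := (rep_unique (hBrep _ hpT)).1.symm
    rw [h1]


lemma sum_cubes (n : ℕ) :
    ∑ k ∈ Finset.range n, ((k : ℚ) * ((k : ℚ) + 1) * (2 * (k : ℚ) + 1) / 3)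
      = ((n : ℚ) ^ 4 - (n : ℚ) ^ 2) / 6 := by
  induction n with
  | zero => simp
  | succ m ih => rw [Finset.sum_range_succ, ih]; push_cast; ring

lemma card1 (n : ℕ) (c : ℤ) (h1 : (n : ℤ) ≤ c) (h2 : c ≤ 2 * (n : ℤ) - 1) :
    ((hexU n).filter (fun p => p.1 + p.2 = c)).card = (c + 1).toNat := by
  have himg : (hexU n).filter (fun p => p.1 + p.2 = c)
      = (Icc (0 : ℤ) c).image (fun i => (i, c - i)) := by
    ext ⟨i, j⟩
    simp only [hexU, square, Finset.mem_filter, Finset.mem_product, Finset.mem_Icc,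
      Finset.mem_image, Prod.mk.injEq]
    constructor
    · intro h
      exact ⟨i, by omega, rfl, by omega⟩
    · rintro ⟨a, ha, rfl, rfl⟩
      omega
  rw [himg, Finset.card_image_of_injective _ (fun a b h => by simpa using congrArg Prod.fst h),
    Int.card_Icc]
  omega

lemma card2 (n : ℕ) (c : ℤ) (h1 : 2 * (n : ℤ) ≤ c) (h2 : c ≤ 3 * (n : ℤ) - 1) :
    ((hexU n).filter (fun p => p.1 + p.2 = c)).card = (4 * (n : ℤ) - 1 - c).toNat := by
  have himg : (hexU n).filter (fun p => p.1 + p.2 = c)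
      = (Icc (c - (2 * (n : ℤ) - 1)) (2 * (n : ℤ) - 1)).image (fun i => (i, c - i)) := by
    ext ⟨i, j⟩
    simp only [hexU, square, Finset.mem_filter, Finset.mem_product, Finset.mem_Icc,
      Finset.mem_image, Prod.mk.injEq]
    constructor
    · intro h
      exact ⟨i, by omega, rfl, by omega⟩
    · rintro ⟨a, ha, rfl, rfl⟩
      omega
  rw [himg, Finset.card_image_of_injective _ (fun a b h => by simpa using congrArg Prod.fst h),
    Int.card_Icc]
  omega

lemma hex_sum (n : ℕ) (hn : 1 ≤ n) :
    ∑ x ∈ hexF n, f n x = ((n : ℚ) ^ 4 - (n : ℚ) ^ 2) / 6 := by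
  classical
  have hdisj : Disjoint ((hexU n).image (fun p => ((true, p) : Tri)))
      ((hexD n).image (fun p => ((false, p) : Tri))) := by
    rw [Finset.disjoint_left]
    rintro ⟨b, p⟩ h1 h2
    simp only [Finset.mem_image, Prod.mk.injEq] at h1 h2
    obtain ⟨a, _, hb, _⟩ := h1
    obtain ⟨a', _, hb', _⟩ := h2
    rw [← hb'] at hb
    exact Bool.noConfusion hb
  rw [hexF, Finset.sum_union hdisj,
    Finset.sum_image (fun x _ y _ h => by simpa using h),
    Finset.sum_image (fun x _ y _ h => by simpa using h)]
  have hfU : ∀ p ∈ hexU n, f n ((true, p) : Tri) = g n (p.1 + p.2) := fun p _ => by simp [f]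
  have hfD : ∀ p ∈ hexD n, f n ((false, p) : Tri) = -g n (p.1 + p.2 + 1) := fun p _ => by
    simp [f]
  rw [Finset.sum_congr rfl hfU, Finset.sum_congr rfl hfD]
  have hD2 : ∑ p ∈ hexD n, -g n (p.1 + p.2 + 1)
      = ∑ p ∈ hexU n, -g n (4 * (n : ℤ) - 1 - (p.1 + p.2)) := by
    apply Finset.sum_nbij' (i := fun p : ℤ × ℤ => (2 * (n : ℤ) - 1 - p.1, 2 * (n : ℤ) - 1 - p.2))
      (j := fun p : ℤ × ℤ => (2 * (n : ℤ) - 1 - p.1, 2 * (n : ℤ) - 1 - p.2))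
    · intro p hp
      simp only [hexU, hexD, square, Finset.mem_filter, Finset.mem_product, Finset.mem_Icc] at *
      omega
    · intro p hp
      simp only [hexU, hexD, square, Finset.mem_filter, Finset.mem_product, Finset.mem_Icc] at *
      omega
    · intro p _
      apply Prod.ext <;> (dsimp only; ring)
    · intro p _
      apply Prod.ext <;> (dsimp only; ring)
    · intro p _
      dsimp only
      have harg : 4 * (n : ℤ) - 1 - ((2 * (n : ℤ) - 1 - p.1) + (2 * (n : ℤ) - 1 - p.2))
          = p.1 + p.2 + 1 := by ring
      rw [harg]
  rw [hD2, ← Finset.sum_add_distrib]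
  have hmaps : ∀ p ∈ hexU n, p.1 + p.2 ∈ Icc (n : ℤ) (3 * (n : ℤ) - 1) := by
    intro p hp
    simp only [hexU, square, Finset.mem_filter] at hp
    rw [Finset.mem_Icc]
    exact ⟨hp.2.1, hp.2.2⟩
  rw [← Finset.sum_fiberwise_of_maps_to hmaps
    (fun p : ℤ × ℤ => g n (p.1 + p.2) + -g n (4 * (n : ℤ) - 1 - (p.1 + p.2)))]
  have hinner : ∀ c ∈ Icc (n : ℤ) (3 * (n : ℤ) - 1),
      (∑ p ∈ (hexU n).filter (fun p => p.1 + p.2 = c),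
          (g n (p.1 + p.2) + -g n (4 * (n : ℤ) - 1 - (p.1 + p.2))))
        = ((hexU n).filter (fun p => p.1 + p.2 = c)).card
            • (g n c + -g n (4 * (n : ℤ) - 1 - c)) := by
    intro c _
    rw [Finset.sum_congr rfl (fun p hp => ?_), Finset.sum_const]
    rw [Finset.mem_filter] at hp
    rw [hp.2]
  rw [Finset.sum_congr rfl hinner]
  have hsplit : Icc (n : ℤ) (3 * (n : ℤ) - 1)
      = Icc (n : ℤ) (2 * (n : ℤ) - 1) ∪ Icc (2 * (n : ℤ)) (3 * (n : ℤ) - 1) := by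
    ext c
    simp only [Finset.mem_Icc, Finset.mem_union]
    omega
  have hdisj2 : Disjoint (Icc (n : ℤ) (2 * (n : ℤ) - 1)) (Icc (2 * (n : ℤ)) (3 * (n : ℤ) - 1)) := by
    rw [Finset.disjoint_left]
    intro c h1 h2
    simp only [Finset.mem_Icc] at h1 h2
    omega
  rw [hsplit, Finset.sum_union hdisj2]
  have hA1 : ∑ k ∈ Finset.range n,
        (((2 * (n : ℤ) - 1 - (k : ℤ) + 1).toNat : ℚ)
          * (g n (2 * (n : ℤ) - 1 - (k : ℤ))
            + -g n (4 * (n : ℤ) - 1 - (2 * (n : ℤ) - 1 - (k : ℤ)))))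
      = ∑ c ∈ Icc (n : ℤ) (2 * (n : ℤ) - 1),
          ((hexU n).filter (fun p => p.1 + p.2 = c)).card
            • (g n c + -g n (4 * (n : ℤ) - 1 - c)) := by
    apply Finset.sum_nbij' (i := fun k : ℕ => 2 * (n : ℤ) - 1 - (k : ℤ))
      (j := fun c : ℤ => (2 * (n : ℤ) - 1 - c).toNat)
    · intro k hk
      simp only [Finset.mem_range] at hk
      simp only [Finset.mem_Icc]
      omega
    · intro c hc
      simp only [Finset.mem_Icc] at hc
      simp only [Finset.mem_range]
      omega
    · intro k hk
      simp only [Finset.mem_range] at hk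
      omega
    · intro c hc
      simp only [Finset.mem_Icc] at hc
      omega
    · intro k hk
      simp only [Finset.mem_range] at hk
      rw [card1 n _ (by omega) (by omega), nsmul_eq_mul]
  have hA2 : ∑ k ∈ Finset.range n,
        (((4 * (n : ℤ) - 1 - (2 * (n : ℤ) + (k : ℤ))).toNat : ℚ)
          * (g n (2 * (n : ℤ) + (k : ℤ))
            + -g n (4 * (n : ℤ) - 1 - (2 * (n : ℤ) + (k : ℤ)))))
      = ∑ c ∈ Icc (2 * (n : ℤ)) (3 * (n : ℤ) - 1),
          ((hexU n).filter (fun p => p.1 + p.2 = c)).card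
            • (g n c + -g n (4 * (n : ℤ) - 1 - c)) := by
    apply Finset.sum_nbij' (i := fun k : ℕ => 2 * (n : ℤ) + (k : ℤ))
      (j := fun c : ℤ => (c - 2 * (n : ℤ)).toNat)
    · intro k hk
      simp only [Finset.mem_range] at hk
      simp only [Finset.mem_Icc]
      omega
    · intro c hc
      simp only [Finset.mem_Icc] at hc
      simp only [Finset.mem_range]
      omega
    · intro k hk
      simp only [Finset.mem_range] at hk
      omega
    · intro c hc
      simp only [Finset.mem_Icc] at hc
      omega
    · intro k hk
      simp only [Finset.mem_range] at hk
      rw [card2 n _ (by omega) (by omega), nsmul_eq_mul]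
  rw [← hA1, ← hA2, ← Finset.sum_add_distrib]
  have hper : ∀ k ∈ Finset.range n,
      (((2 * (n : ℤ) - 1 - (k : ℤ) + 1).toNat : ℚ)
          * (g n (2 * (n : ℤ) - 1 - (k : ℤ))
            + -g n (4 * (n : ℤ) - 1 - (2 * (n : ℤ) - 1 - (k : ℤ))))
        + ((4 * (n : ℤ) - 1 - (2 * (n : ℤ) + (k : ℤ))).toNat : ℚ)
          * (g n (2 * (n : ℤ) + (k : ℤ))
            + -g n (4 * (n : ℤ) - 1 - (2 * (n : ℤ) + (k : ℤ)))))
      = (k : ℚ) * ((k : ℚ) + 1) * (2 * (k : ℚ) + 1) / 3 := by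
    intro k hk
    simp only [Finset.mem_range] at hk
    have e1 : ((2 * (n : ℤ) - 1 - (k : ℤ) + 1).toNat : ℤ) = 2 * (n : ℤ) - (k : ℤ) := by omega
    have e2 : ((4 * (n : ℤ) - 1 - (2 * (n : ℤ) + (k : ℤ))).toNat : ℤ)
        = 2 * (n : ℤ) - 1 - (k : ℤ) := by omega
    have e1' : (((2 * (n : ℤ) - 1 - (k : ℤ) + 1).toNat : ℕ) : ℚ) = 2 * (n : ℚ) - (k : ℚ) := by
      exact_mod_cast e1
    have e2' : (((4 * (n : ℤ) - 1 - (2 * (n : ℤ) + (k : ℤ))).toNat : ℕ) : ℚ)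
        = 2 * (n : ℚ) - 1 - (k : ℚ) := by exact_mod_cast e2
    rw [e1', e2']
    simp only [g]
    push_cast
    ring
  rw [Finset.sum_congr rfl hper, sum_cubes]

end MoI

/-- The total "moment of inertia" about the vertical axis of the lozenges
`{U(i,j), D(i,j)}`, summed over all lozenge tilings of the regular hexagon of side `n`,
equals the number of tilings times `(n⁴ - n²)/6`. -/
theorem vertical_moment_of_inertia (n : ℕ) (hn : 1 ≤ n) :
    (∑ᶠ T : {T : Set (Set Tri) // IsLozengeTiling (Hexagon n) T},
        ∑ᶠ p ∈ {p : ℤ × ℤ | ({(true, p), (false, p)} : Set Tri) ∈ T.1},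
          (((p.1 + p.2 - (2 * (n : ℤ) - 1)) ^ 2 : ℤ) : ℚ)) =
      (Nat.card {T : Set (Set Tri) // IsLozengeTiling (Hexagon n) T} : ℚ) *
        ((n : ℚ) ^ 4 - (n : ℚ) ^ 2) / 6 := by
  classical
  have hHexFin : (Hexagon n).Finite := by
    have h : Hexagon n = ↑(MoI.hexF n) := by
      ext x
      exact (MoI.mem_hexF).symm
    rw [h]
    exact (MoI.hexF n).finite_toSet
  have hS : {T : Set (Set Tri) | IsLozengeTiling (Hexagon n) T}.Finite := by
    apply Set.Finite.subset (Set.Finite.finite_subsets (Set.Finite.finite_subsets hHexFin))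
    intro T hT B hB
    exact hT.2.1 B hB
  haveI : Finite {T : Set (Set Tri) // IsLozengeTiling (Hexagon n) T} := hS.to_subtype
  letI := Fintype.ofFinite {T : Set (Set Tri) // IsLozengeTiling (Hexagon n) T}
  have hconst : ∀ T : {T : Set (Set Tri) // IsLozengeTiling (Hexagon n) T},
      (∑ᶠ p ∈ {p : ℤ × ℤ | ({(true, p), (false, p)} : Set Tri) ∈ T.1},
          (((p.1 + p.2 - (2 * (n : ℤ) - 1)) ^ 2 : ℤ) : ℚ))
        = ((n : ℚ) ^ 4 - (n : ℚ) ^ 2) / 6 := fun T => by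
    rw [MoI.tiling_moment n T.1 T.2, MoI.hex_sum n hn]
  rw [finsum_eq_sum_of_fintype, Finset.sum_congr rfl (fun T _ => hconst T), Finset.sum_const,
    Finset.card_univ, ← Nat.card_eq_fintype_card, nsmul_eq_mul]
  ring
end

section
/- (Dual Cauchy identity, alternant form.) Let m, n ≥ 1 and work in the polynomial ring ℤ[x_1,…,x_m, y_1,…,y_n]. For each partition λ contained in the m×n box (i.e., λ : Fin m → ℕ weakly decreasing with all parts λ_i ≤ n), define μ(λ) : Fin n → ℕ by μ_j = #{i ∈ {1,…,m} : λ_i ≤ n - j} for j = 1,…,n (the conjugate of the complement of λ in the box). Then ∏_{i=1}^m ∏_{j=1}^n (x_i + y_j) · det[x_k^{m-i}]_{1≤i,k≤m} · det[y_l^{n-j}]_{1≤j,l≤n} = Σ_{λ ⊆ (n^m)} det[x_k^{λ_i + m - i}]_{1≤i,k≤m} · det[y_l^{μ(λ)_j + n - j}]_{1≤j,l≤n}. (Dividing both sides by the two Vandermonde determinants, this is the identity ∏_{i,j}(x_i + y_j) = Σ_λ s_λ(x) s_{λ̃'}(y), where λ̃' is the conjugate of the complement of λ in the m×n box.) -/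
/-!
Expand the `(m + n) × (m + n)` Vandermonde determinant in `x₁, …, x_m, -y₁, …, -y_n` along its
first `m` columns (generalized Laplace expansion). On the one hand it factors as
`det[x_k^{m-i}] · ∏ (x_i + y_j) · det[(-y_l)^{n-j}]`. On the other hand, a choice of `m` rows is a
set of `m` exponents in `{0, …, m + n - 1}`: listed decreasingly they are `λ_i + m - i` for a unique
partition `λ` in the `m × n` box, and the complementary exponents are `μ_j + n - j` with `μ = λ̃'`.
Adding a box to `λ` swaps two adjacent exponents between the two sets, which flips both the sign of
the shuffle and the parity of `∑ (μ_j + n - j)`; hence every term carries the same sign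
`(-1)^{∑ (n - j)}`, which also appears in `det[(-y_l)^{n-j}]` and cancels.
-/

open MvPolynomial

/-- The conjugate of the complement in the `m × n` box of a partition `lam` contained in
the box: `μ_j = #{i : lam i ≤ n - j}` (here `j : Fin n` is 0-indexed, standing for the
1-indexed column `j + 1`). -/
def boxComplConj (m n : ℕ) (lam : Fin m → ℕ) (j : Fin n) : ℕ :=
  (Finset.univ.filter fun i : Fin m => lam i ≤ n - ((j : ℕ) + 1)).card

open Equiv Function

theorem Equiv.range_comp_inr_eq_compl {α β γ : Type*} (s : α ⊕ β ≃ γ) :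
    Set.range (s ∘ Sum.inr) = (Set.range (s ∘ Sum.inl))ᶜ := by
  rw [Set.range_comp, Set.range_comp, ← Set.compl_range_inl, Equiv.image_compl]

section AntiShuffle

variable {α β γ : Type*} [LinearOrder α] [LinearOrder β] [LinearOrder γ]

def IsAntiShuffle (s : α ⊕ β ≃ γ) : Prop :=
  StrictAnti (s ∘ Sum.inl) ∧ StrictAnti (s ∘ Sum.inr)

variable [WellFoundedGT α] [WellFoundedGT β]

theorem IsAntiShuffle.eq_of_range_inl_eq {s s' : α ⊕ β ≃ γ} (hs : IsAntiShuffle s)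
    (hs' : IsAntiShuffle s') (h : Set.range (s ∘ Sum.inl) = Set.range (s' ∘ Sum.inl)) :
    s = s' := by
  have hinl := (hs.1.range_inj hs'.1).mp h
  have hinr := (hs.2.range_inj hs'.2).mp <| by
    rw [range_comp_inr_eq_compl, range_comp_inr_eq_compl, h]
  ext (a | b)
  exacts [congrFun hinl a, congrFun hinr b]

theorem IsAntiShuffle.sumCongr_trans_injective {s s' : α ⊕ β ≃ γ} (hs : IsAntiShuffle s)
    (hs' : IsAntiShuffle s') {π π' : Perm α} {ρ ρ' : Perm β}
    (h : (Perm.sumCongr π ρ).trans s = (Perm.sumCongr π' ρ').trans s') :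
    s = s' ∧ π = π' ∧ ρ = ρ' := by
  have hcomp : (s ∘ Sum.inl) ∘ π = (s' ∘ Sum.inl) ∘ π' :=
    funext fun a => congrFun (congrArg DFunLike.coe h) (Sum.inl a)
  obtain rfl : s = s' := hs.eq_of_range_inl_eq hs' <| by
    rw [← π.surjective.range_comp, hcomp, π'.surjective.range_comp]
  have hsc : Perm.sumCongr π ρ = Perm.sumCongr π' ρ' := by
    simpa [Equiv.trans_assoc] using congrArg (fun e => e.trans s.symm) h
  refine ⟨rfl, ?_, ?_⟩ <;> ext x
  · simpa using congrFun (congrArg DFunLike.coe hsc) (Sum.inl x)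
  · simpa using congrFun (congrArg DFunLike.coe hsc) (Sum.inr x)

end AntiShuffle

theorem exists_sumCongr_trans_isAntiShuffle {m n : ℕ} {γ : Type*} [LinearOrder γ]
    (e : Fin m ⊕ Fin n ≃ γ) :
    ∃ (π : Perm (Fin m)) (ρ : Perm (Fin n)) (s : Fin m ⊕ Fin n ≃ γ),
      IsAntiShuffle s ∧ (Perm.sumCongr π ρ).trans s = e := by
  set π := Tuple.sort (OrderDual.toDual ∘ e ∘ Sum.inl)
  set ρ := Tuple.sort (OrderDual.toDual ∘ e ∘ Sum.inr)
  refine ⟨π⁻¹, ρ⁻¹, (Perm.sumCongr π ρ).trans e, ⟨?_, ?_⟩, ?_⟩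
  · exact Antitone.strictAnti_of_injective
      (monotone_toDual_comp_iff.mp (Tuple.monotone_sort (OrderDual.toDual ∘ e ∘ Sum.inl)))
      (e.injective.comp (Sum.inl_injective.comp π.injective))
  · exact Antitone.strictAnti_of_injective
      (monotone_toDual_comp_iff.mp (Tuple.monotone_sort (OrderDual.toDual ∘ e ∘ Sum.inr)))
      (e.injective.comp (Sum.inr_injective.comp ρ.injective))
  · ext (a | b) <;> simp

theorem Fin.swap_lt_swap_of_lt {N : ℕ} {a b x y : Fin N} (hab : (b : ℕ) = a + 1) (hxy : x < y)
    (h : ¬(x = a ∧ y = b)) : swap a b x < swap a b y := by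
  simp only [swap_apply_def]
  split_ifs <;> simp only [Fin.lt_def, Fin.ext_iff] at * <;> omega

theorem StrictAnti.swap_comp {ι : Type*} [Preorder ι] {N : ℕ} {f : ι → Fin N} (hf : StrictAnti f)
    {a b : Fin N} (hab : (b : ℕ) = a + 1) (h : ¬(a ∈ Set.range f ∧ b ∈ Set.range f)) :
    StrictAnti (swap a b ∘ f) :=
  fun _ _ hii' => Fin.swap_lt_swap_of_lt hab (hf hii') fun ⟨h₁, h₂⟩ => h ⟨⟨_, h₁⟩, ⟨_, h₂⟩⟩

theorem Equiv.Perm.sign_trans_swap_trans {α γ : Type*} [Fintype α] [DecidableEq α] [DecidableEq γ]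
    (e : α ≃ γ) (c : γ ≃ α) {a b : γ} (hab : a ≠ b) :
    Perm.sign ((e.trans (swap a b)).trans c) = -Perm.sign (e.trans c) := by
  have : (e.trans (swap a b)).trans c = swap (c a) (c b) * e.trans c := by
    ext x
    simp only [trans_apply, swap_apply_def, Perm.mul_apply, EmbeddingLike.apply_eq_iff_eq]
    split_ifs <;> rfl
  rw [this, Perm.sign_mul, Perm.sign_swap (c.injective.ne hab), neg_one_mul]

section SwapStep

variable {α β : Type*} [DecidableEq α] {N : ℕ} {s s' : α ⊕ β ≃ Fin N} {i₀ : α}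

theorem sum_val_inr_eq_succ_of_inl_update [Fintype α] [Fintype β]
    (h : ∀ i, (s' (Sum.inl i) : ℕ) =
      update (fun i => (s (Sum.inl i) : ℕ)) i₀ (s (Sum.inl i₀) + 1) i) :
    ∑ j, (s (Sum.inr j) : ℕ) = ∑ j, (s' (Sum.inr j) : ℕ) + 1 := by
  have htotal (e : α ⊕ β ≃ Fin N) : ∑ i, (e (Sum.inl i) : ℕ) + ∑ j, (e (Sum.inr j) : ℕ) =
      ∑ p : Fin N, (p : ℕ) := by
    rw [← Fintype.sum_sum_type (fun c => (e c : ℕ)), e.sum_comp (fun p => (p : ℕ))]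
  have hinl : ∑ i, (s' (Sum.inl i) : ℕ) = ∑ i, (s (Sum.inl i) : ℕ) + 1 := by
    simp only [h, Finset.sum_update_of_mem (Finset.mem_univ i₀),
      ← Finset.add_sum_erase _ _ (Finset.mem_univ i₀), Finset.sdiff_singleton_eq_erase]
    ring
  have := htotal s
  have := htotal s'
  omega

theorem IsAntiShuffle.eq_trans_swap_of_inl_update [LinearOrder α] [LinearOrder β]
    [WellFoundedGT α] [WellFoundedGT β]
    (hs : IsAntiShuffle s) (hs' : IsAntiShuffle s')
    (h : ∀ i, (s' (Sum.inl i) : ℕ) =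
      update (fun i => (s (Sum.inl i) : ℕ)) i₀ (s (Sum.inl i₀) + 1) i) :
    s' = s.trans (swap (s (Sum.inl i₀)) (s' (Sum.inl i₀))) := by
  have hb : (s' (Sum.inl i₀) : ℕ) = s (Sum.inl i₀) + 1 := by simpa using h i₀
  have hfix {i} (hi : i ≠ i₀) : s' (Sum.inl i) = s (Sum.inl i) := Fin.ext <| by simpa [hi] using h i
  obtain ⟨j₀, hj₀⟩ : ∃ j, s (Sum.inr j) = s' (Sum.inl i₀) := by
    obtain ⟨(i | j), hc⟩ := s.surjective (s' (Sum.inl i₀))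
    · by_cases hi : i = i₀
      · subst hi; omega
      · rw [← hfix hi] at hc
        exact absurd (s'.injective hc) (by simpa using hi)
    · exact ⟨j, hc⟩
  have hshuf : IsAntiShuffle (s.trans (swap (s (Sum.inl i₀)) (s' (Sum.inl i₀)))) := by
    refine ⟨hs.1.swap_comp hb ?_, hs.2.swap_comp hb ?_⟩
    · rintro ⟨-, i, hi⟩
      exact Sum.inl_ne_inr (s.injective (hi.trans hj₀.symm))
    · rintro ⟨⟨j, hj⟩, -⟩
      exact Sum.inl_ne_inr (s.injective hj).symm
  refine hs'.eq_of_range_inl_eq hshuf (congrArg Set.range (funext fun i => ?_))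
  by_cases hi : i = i₀
  · subst hi
    exact (swap_apply_left _ _).symm
  · refine (hfix hi).trans (swap_apply_of_ne_of_ne ?_ ?_).symm
    · exact s.injective.ne (by simpa using hi)
    · rw [← hj₀]
      exact s.injective.ne Sum.inl_ne_inr

end SwapStep

theorem StrictAnti.antitone_add_val {m : ℕ} {f : Fin m → ℕ} (hf : StrictAnti f) :
    Antitone fun i => f i + i := by
  cases m with
  | zero => exact fun i => i.elim0
  | succ k =>
    refine Fin.antitone_iff_succ_le.mpr fun i => ?_
    have := hf (Fin.castSucc_lt_succ (i := i))
    simp only [Fin.val_succ, Fin.val_castSucc]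
    omega

theorem Matrix.det_eq_sum_sign_smul_det_mul_det {α β ι R : Type*} [Fintype α] [Fintype β]
    [DecidableEq α] [DecidableEq β] [Fintype ι] [CommRing R] (M : Matrix (α ⊕ β) (α ⊕ β) R)
    (ψ : ι → Perm (α ⊕ β))
    (hψ : Bijective fun q : ι × Perm α × Perm β => ψ q.1 * Perm.sumCongr q.2.1 q.2.2) :
    M.det = ∑ i, Perm.sign (ψ i) •
      ((M.submatrix (ψ i ∘ Sum.inl) Sum.inl).det * (M.submatrix (ψ i ∘ Sum.inr) Sum.inr).det) := by
  rw [Matrix.det_apply, ← Fintype.sum_bijective _ hψ _ _ fun _ => rfl, Fintype.sum_prod_type]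
  refine Finset.sum_congr rfl fun i _ => ?_
  simp only [Matrix.det_apply, Finset.sum_mul_sum, Finset.smul_sum, Fintype.sum_prod_type,
    Perm.sign_mul, Perm.sign_sumCongr, Fintype.prod_sum_type, Perm.mul_apply,
    Perm.sumCongr_apply, Sum.map_inl, Sum.map_inr, Matrix.submatrix_apply, Function.comp_apply,
    mul_smul, smul_mul_smul_comm]

section Vandermonde

variable {R : Type*} [CommRing R]

theorem Fin.prod_prod_Ioi_rev {M : Type*} [CommMonoid M] {p : ℕ} (f : Fin p → Fin p → M) :
    ∏ i, ∏ j ∈ Finset.Ioi i, f (Fin.rev j) (Fin.rev i) = ∏ i, ∏ j ∈ Finset.Ioi i, f i j := by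
  rw [Finset.prod_sigma', Finset.prod_sigma']
  refine Finset.prod_bij' (fun q _ => ⟨Fin.rev q.2, Fin.rev q.1⟩)
    (fun q _ => ⟨Fin.rev q.2, Fin.rev q.1⟩) ?_ ?_ ?_ ?_ ?_ <;> simp

theorem Matrix.det_of_pow_sub_one_sub {p : ℕ} (v : Fin p → R) :
    (Matrix.of fun i k : Fin p => v k ^ (p - 1 - (i : ℕ))).det =
      ∏ i, ∏ j ∈ Finset.Ioi i, (v i - v j) := by
  have : (Matrix.of fun i k : Fin p => v k ^ (p - 1 - (i : ℕ))) =
      ((Matrix.vandermonde (v ∘ Fin.rev)).submatrix Fin.revPerm Fin.revPerm).transpose := by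
    ext i k
    simp only [Matrix.transpose_apply, Matrix.submatrix_apply, Matrix.vandermonde_apply,
      Function.comp_apply, Fin.revPerm_apply, Fin.rev_rev, Matrix.of_apply, Fin.val_rev]
    congr 1
    omega
  rw [this, Matrix.det_transpose, Matrix.det_submatrix_equiv_self, Matrix.det_vandermonde]
  exact Fin.prod_prod_Ioi_rev fun a b => v a - v b

theorem Fin.prod_prod_Ioi_add {M : Type*} [CommMonoid M] {m n : ℕ}
    (f : Fin (m + n) → Fin (m + n) → M) :
    ∏ p, ∏ q ∈ Finset.Ioi p, f p q =
      (∏ i, ∏ i' ∈ Finset.Ioi i, f (Fin.castAdd n i) (Fin.castAdd n i')) *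
        (∏ i, ∏ j, f (Fin.castAdd n i) (Fin.natAdd m j)) *
        ∏ j, ∏ j' ∈ Finset.Ioi j, f (Fin.natAdd m j) (Fin.natAdd m j') := by
  have hlt (i : Fin m) (j : Fin n) : Fin.castAdd n i < Fin.natAdd m j :=
    Fin.lt_def.mpr (by simp only [Fin.val_castAdd, Fin.val_natAdd]; omega)
  have hnlt (i : Fin m) (j : Fin n) : ¬Fin.natAdd m j < Fin.castAdd n i := (hlt i j).not_gt
  simp only [← Finset.filter_lt_eq_Ioi, Finset.prod_filter, Fin.prod_univ_add, hlt, hnlt,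
    (Fin.strictMono_castAdd n).lt_iff_lt, Fin.natAdd_lt_natAdd_iff, if_true, if_false,
    Finset.prod_const_one, mul_one, Finset.prod_mul_distrib, mul_assoc]

theorem Matrix.det_of_neg_pow {p : ℕ} (y : Fin p → R) (b : Fin p → ℕ) :
    (Matrix.of fun j l : Fin p => (-y l) ^ b j).det =
      (-1) ^ (∑ j, b j) * (Matrix.of fun j l : Fin p => y l ^ b j).det := by
  simp_rw [neg_pow (y _)]
  rw [← Finset.prod_pow_eq_pow_sum, ← Matrix.det_mul_column]
  rfl

end Vandermonde

def boxPartitions (m n : ℕ) : Set (Fin m → ℕ) := {lam | Antitone lam ∧ ∀ i, lam i ≤ n}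

def xExp (m : ℕ) (lam : Fin m → ℕ) (i : Fin m) : ℕ := lam i + (m - 1 - i)

def yExp (m n : ℕ) (lam : Fin m → ℕ) (j : Fin n) : ℕ := boxComplConj m n lam j + (n - 1 - j)

section BoxPartition

variable {m n : ℕ} {lam : Fin m → ℕ}

theorem boxComplConj_le (lam : Fin m → ℕ) (j : Fin n) : boxComplConj m n lam j ≤ m :=
  (Finset.card_filter_le _ _).trans_eq (Finset.card_fin m)

theorem antitone_boxComplConj (lam : Fin m → ℕ) : Antitone (boxComplConj m n lam) :=
  fun j j' hjj' => Finset.card_le_card <| Finset.monotone_filter_right _ fun i hi => by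
    have : (j : ℕ) ≤ j' := hjj'
    omega

theorem xExp_lt (hlam : lam ∈ boxPartitions m n) (i : Fin m) : xExp m lam i < m + n := by
  have := hlam.2 i
  have := i.isLt
  unfold xExp
  omega

theorem yExp_lt (lam : Fin m → ℕ) (j : Fin n) : yExp m n lam j < m + n := by
  have := boxComplConj_le lam j
  have := j.isLt
  unfold yExp
  omega

theorem strictAnti_xExp (hlam : Antitone lam) : StrictAnti (xExp m lam) := fun i i' hii' => by
  have := hlam hii'.le
  have := i'.isLt
  have : (i : ℕ) < i' := hii'
  unfold xExp
  omega

theorem strictAnti_yExp (lam : Fin m → ℕ) : StrictAnti (yExp m n lam) := fun j j' hjj' => by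
  have := antitone_boxComplConj lam hjj'.le
  have := j'.isLt
  have : (j : ℕ) < j' := hjj'
  unfold yExp
  omega

theorem xExp_ne_yExp (hlam : Antitone lam) (i : Fin m) (j : Fin n) :
    xExp m lam i ≠ yExp m n lam j := by
  have := i.isLt
  unfold xExp yExp
  by_cases hij : lam i ≤ n - (j + 1)
  · have : Finset.Ici i ⊆ Finset.univ.filter fun i' : Fin m => lam i' ≤ n - (j + 1) :=
      fun i' hi' => Finset.mem_filter.mpr
        ⟨Finset.mem_univ _, (hlam (Finset.mem_Ici.mp hi')).trans hij⟩
    have := (Fin.card_Ici i).symm.trans_le (Finset.card_le_card this)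
    unfold boxComplConj
    omega
  · have : (Finset.univ.filter fun i' : Fin m => lam i' ≤ n - (j + 1)) ⊆ Finset.Ioi i :=
      fun i' hi' => Finset.mem_Ioi.mpr <| lt_of_not_ge fun hle =>
        hij ((hlam hle).trans (Finset.mem_filter.mp hi').2)
    have := (Finset.card_le_card this).trans_eq (Fin.card_Ioi i)
    unfold boxComplConj
    omega

end BoxPartition

section ExpEquiv

variable {m n : ℕ}

noncomputable def expEquiv (lam : Fin m → ℕ) (hlam : lam ∈ boxPartitions m n) :
    Fin m ⊕ Fin n ≃ Fin (m + n) :=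
  Equiv.ofBijective (Sum.elim (fun i => ⟨xExp m lam i, xExp_lt hlam i⟩)
    (fun j => ⟨yExp m n lam j, yExp_lt lam j⟩)) <| by
    rw [Fintype.bijective_iff_injective_and_card]
    refine ⟨Injective.sumElim ?_ ?_ fun i j h => xExp_ne_yExp hlam.1 i j (Fin.val_eq_of_eq h),
      by simp⟩
    · exact fun i i' h => (strictAnti_xExp hlam.1).injective (Fin.val_eq_of_eq h)
    · exact fun j j' h => (strictAnti_yExp lam).injective (Fin.val_eq_of_eq h)

variable {lam : Fin m → ℕ} (hlam : lam ∈ boxPartitions m n)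

@[simp] theorem val_expEquiv_inl (i : Fin m) :
    (expEquiv lam hlam (Sum.inl i) : ℕ) = xExp m lam i :=
  rfl

@[simp] theorem val_expEquiv_inr (j : Fin n) :
    (expEquiv lam hlam (Sum.inr j) : ℕ) = yExp m n lam j :=
  rfl

theorem isAntiShuffle_expEquiv : IsAntiShuffle (expEquiv lam hlam) :=
  ⟨fun _ _ h => Fin.lt_def.mpr (strictAnti_xExp hlam.1 h),
    fun _ _ h => Fin.lt_def.mpr (strictAnti_yExp lam h)⟩

theorem expEquiv_injective {lam' : Fin m → ℕ} (hlam' : lam' ∈ boxPartitions m n)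
    (h : expEquiv lam hlam = expEquiv lam' hlam') : lam = lam' := by
  funext i
  have := congrArg Fin.val (congrFun (congrArg DFunLike.coe h) (Sum.inl i))
  simp only [val_expEquiv_inl, xExp] at this
  omega

end ExpEquiv

theorem IsAntiShuffle.exists_expEquiv_eq {m n : ℕ} {s : Fin m ⊕ Fin n ≃ Fin (m + n)}
    (hs : IsAntiShuffle s) : ∃ lam hlam, expEquiv (n := n) lam hlam = s := by
  have hanti : Antitone fun i => (s (Sum.inl i) : ℕ) + i :=
    StrictAnti.antitone_add_val fun i i' h => Fin.lt_def.mp (hs.1 h)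
  have hbounds (i : Fin m) :
      m - 1 ≤ (s (Sum.inl i) : ℕ) + i ∧ (s (Sum.inl i) : ℕ) + i < m + n := by
    have := i.isLt
    have hlast := hanti (show i ≤ ⟨m - 1, by omega⟩ from Fin.le_def.mpr (by dsimp only; omega))
    have hfirst := hanti (show (⟨0, by omega⟩ : Fin m) ≤ i from Fin.le_def.mpr (by simp))
    have := (s (Sum.inl ⟨0, by omega⟩)).isLt
    simp only at hlast hfirst
    omega
  have hlam : (fun i => (s (Sum.inl i) : ℕ) + i - (m - 1)) ∈ boxPartitions m n :=
    ⟨fun i i' h => Nat.sub_le_sub_right (hanti h) _,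
      fun i => by have := hbounds i; dsimp only; omega⟩
  refine ⟨_, hlam, (isAntiShuffle_expEquiv hlam).eq_of_range_inl_eq hs ?_⟩
  congr 1
  funext i
  ext
  have := hbounds i
  simp only [Function.comp_apply, val_expEquiv_inl, xExp]
  omega

theorem boxPartitions_finite (m n : ℕ) : (boxPartitions m n).Finite :=
  (Set.finite_range fun g : Fin m → Fin (n + 1) => fun i => (g i : ℕ)).subset
    fun lam hlam => ⟨fun i => ⟨lam i, Nat.lt_succ_of_le (hlam.2 i)⟩, rfl⟩

noncomputable instance (m n : ℕ) : Fintype (boxPartitions m n) := (boxPartitions_finite m n).fintype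

-- `labelledVandermonde` gives row `r` the exponent `expLabel r`. This labelling is `expEquiv` of
-- the full box (`expEquiv_const`), so the sign bookkeeping starts from `shufflePerm = 1` there.
def expLabel (m n : ℕ) : Fin m ⊕ Fin n ≃ Fin (m + n) := finSumFinEquiv.trans Fin.revPerm

section ShufflePerm

variable {m n : ℕ}

noncomputable def shufflePerm (lam : Fin m → ℕ) (hlam : lam ∈ boxPartitions m n) :
    Perm (Fin m ⊕ Fin n) :=
  (expEquiv lam hlam).trans (expLabel m n).symm

theorem bijective_shufflePerm_mul_sumCongr :
    Bijective fun q : boxPartitions m n × Perm (Fin m) × Perm (Fin n) =>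
      shufflePerm q.1.1 q.1.2 * Perm.sumCongr q.2.1 q.2.2 := by
  refine ⟨?_, fun σ => ?_⟩
  · rintro ⟨⟨lam, hlam⟩, π, ρ⟩ ⟨⟨lam', hlam'⟩, π', ρ'⟩ h
    have h' : (Perm.sumCongr π ρ).trans (expEquiv lam hlam) =
        (Perm.sumCongr π' ρ').trans (expEquiv lam' hlam') := by
      simpa [shufflePerm, Perm.mul_def, Equiv.trans_assoc] using
        congrArg (·.trans (expLabel m n)) h
    obtain ⟨he, rfl, rfl⟩ := (isAntiShuffle_expEquiv hlam).sumCongr_trans_injective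
      (isAntiShuffle_expEquiv hlam') h'
    obtain rfl := expEquiv_injective hlam hlam' he
    rfl
  · obtain ⟨π, ρ, s, hs, hσ⟩ := exists_sumCongr_trans_isAntiShuffle (σ.trans (expLabel m n))
    obtain ⟨lam, hlam, rfl⟩ := hs.exists_expEquiv_eq
    refine ⟨(⟨lam, hlam⟩, π, ρ), ?_⟩
    change shufflePerm lam hlam * _ = σ
    rw [Perm.mul_def, shufflePerm, ← Equiv.trans_assoc, hσ, Equiv.trans_assoc,
      Equiv.self_trans_symm, Equiv.trans_refl]

end ShufflePerm

section SignOfShuffle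

variable {m n : ℕ} {lam : Fin m → ℕ}

theorem const_mem_boxPartitions (m n : ℕ) : (fun _ => n) ∈ boxPartitions m n :=
  ⟨antitone_const, fun _ => le_rfl⟩

theorem boxComplConj_const (j : Fin n) : boxComplConj m n (fun _ => n) j = 0 := by
  simp only [boxComplConj, Finset.card_eq_zero, Finset.filter_eq_empty_iff]
  omega

theorem expEquiv_const : expEquiv (fun _ => n) (const_mem_boxPartitions m n) = expLabel m n := by
  ext (i | j) <;>
    simp only [val_expEquiv_inl, val_expEquiv_inr, xExp, yExp, boxComplConj_const, zero_add,
      expLabel, trans_apply, finSumFinEquiv_apply_left, finSumFinEquiv_apply_right,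
      Fin.revPerm_apply, Fin.val_rev, Fin.val_castAdd, Fin.val_natAdd] <;> omega

theorem exists_update_succ_mem_boxPartitions (hlam : lam ∈ boxPartitions m n)
    (hfull : ¬∀ i, lam i = n) :
    ∃ i₀, lam i₀ < n ∧ update lam i₀ (lam i₀ + 1) ∈ boxPartitions m n := by
  obtain ⟨i₀, hi₀, hmin⟩ := wellFounded_lt.has_min {i | lam i < n} <| by
    obtain ⟨i, hi⟩ := not_forall.mp hfull
    exact ⟨i, lt_of_le_of_ne (hlam.2 i) hi⟩
  have hfull_before {i} (hi : i < i₀) : lam i = n :=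
    le_antisymm (hlam.2 i) (not_lt.mp fun h => hmin i h hi)
  refine ⟨i₀, hi₀, fun i i' hii' => ?_, fun i => ?_⟩
  · simp only [update_apply]
    split_ifs with h₁ h₂ h₂
    · exact le_rfl
    · rw [hfull_before (lt_of_le_of_ne (h₁ ▸ hii') h₂)]; exact hi₀
    · exact (h₂ ▸ hlam.1 hii').trans (Nat.le_succ _)
    · exact hlam.1 hii'
  · simp only [update_apply]
    split_ifs with h
    · exact h ▸ hi₀
    · exact hlam.2 i

theorem val_expEquiv_update_inl (hlam : lam ∈ boxPartitions m n) {i₀ : Fin m}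
    (hlam' : update lam i₀ (lam i₀ + 1) ∈ boxPartitions m n) (i : Fin m) :
    (expEquiv _ hlam' (Sum.inl i) : ℕ) =
      update (fun i => (expEquiv lam hlam (Sum.inl i) : ℕ)) i₀
        (expEquiv lam hlam (Sum.inl i₀) + 1) i := by
  by_cases hi : i = i₀
  · subst hi
    simp only [val_expEquiv_inl, xExp, update_self]
    omega
  · simp [xExp, hi]

theorem sign_shufflePerm_mul_neg_one_pow {lam : Fin m → ℕ} (hlam : lam ∈ boxPartitions m n) :
    (Perm.sign (shufflePerm lam hlam) : ℤ) * (-1) ^ ∑ j, yExp m n lam j =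
      (-1) ^ ∑ j : Fin n, (n - 1 - (j : ℕ)) := by
  by_cases hfull : ∀ i, lam i = n
  · obtain rfl : lam = fun _ => n := funext hfull
    simp [shufflePerm, expEquiv_const, yExp, boxComplConj_const]
  · obtain ⟨i₀, hi₀, hlam'⟩ := exists_update_succ_mem_boxPartitions hlam hfull
    have hupd := val_expEquiv_update_inl hlam hlam'
    have hsign : Perm.sign (shufflePerm _ hlam') = -Perm.sign (shufflePerm lam hlam) := by
      rw [shufflePerm, (isAntiShuffle_expEquiv hlam).eq_trans_swap_of_inl_update
        (isAntiShuffle_expEquiv hlam') hupd]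
      refine Perm.sign_trans_swap_trans _ _ fun h => ?_
      have := congrArg Fin.val h
      simp only [hupd, update_self] at this
      omega
    have hsum := sum_val_inr_eq_succ_of_inl_update hupd
    simp only [val_expEquiv_inr] at hsum
    rw [← sign_shufflePerm_mul_neg_one_pow hlam', hsum, hsign, pow_succ]
    push_cast
    ring
termination_by ∑ i, (n - lam i)
decreasing_by
  refine Finset.sum_lt_sum (fun i _ => ?_) ⟨i₀, Finset.mem_univ _, ?_⟩
  · simp only [update_apply]
    split_ifs with h
    · subst h; omega
    · exact le_rfl
  · simp only [update_self]; omega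

end SignOfShuffle

def labelledVandermonde {R : Type*} [CommRing R] (m n : ℕ) (z : Fin m ⊕ Fin n → R) :
    Matrix (Fin m ⊕ Fin n) (Fin m ⊕ Fin n) R :=
  Matrix.of fun r c => z c ^ (expLabel m n r : ℕ)

section LabelledVandermonde

variable {R : Type*} [CommRing R] {m n : ℕ}

theorem det_labelledVandermonde (x : Fin m → R) (y : Fin n → R) :
    (labelledVandermonde m n (Sum.elim x y)).det =
      (Matrix.of fun i k : Fin m => x k ^ (m - 1 - (i : ℕ))).det * (∏ i, ∏ j, (x i - y j)) *
        (Matrix.of fun j l : Fin n => y l ^ (n - 1 - (j : ℕ))).det := by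
  rw [← Matrix.det_submatrix_equiv_self finSumFinEquiv.symm]
  have : (labelledVandermonde m n (Sum.elim x y)).submatrix finSumFinEquiv.symm
      finSumFinEquiv.symm = Matrix.of fun p q : Fin (m + n) =>
        (Sum.elim x y ∘ finSumFinEquiv.symm) q ^ (m + n - 1 - (p : ℕ)) := by
    ext p q
    simp only [labelledVandermonde, expLabel, Matrix.submatrix_apply, Matrix.of_apply,
      Equiv.trans_apply, Equiv.apply_symm_apply, Fin.revPerm_apply, Fin.val_rev,
      Function.comp_apply]
    congr 1
    omega
  rw [this, Matrix.det_of_pow_sub_one_sub, Fin.prod_prod_Ioi_add, Matrix.det_of_pow_sub_one_sub,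
    Matrix.det_of_pow_sub_one_sub]
  simp

theorem sign_shufflePerm_smul_det_mul_det (x : Fin m → R) (y : Fin n → R) {lam : Fin m → ℕ}
    (hlam : lam ∈ boxPartitions m n) :
    Perm.sign (shufflePerm lam hlam) •
      (((labelledVandermonde m n (Sum.elim x (-y))).submatrix
          (shufflePerm lam hlam ∘ Sum.inl) Sum.inl).det *
        ((labelledVandermonde m n (Sum.elim x (-y))).submatrix
          (shufflePerm lam hlam ∘ Sum.inr) Sum.inr).det) =
      (-1) ^ (∑ j : Fin n, (n - 1 - (j : ℕ))) *
        ((Matrix.of fun i k : Fin m => x k ^ xExp m lam i).det *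
          (Matrix.of fun j l : Fin n => y l ^ yExp m n lam j).det) := by
  have hx : (labelledVandermonde m n (Sum.elim x (-y))).submatrix
      (shufflePerm lam hlam ∘ Sum.inl) Sum.inl = Matrix.of fun i k => x k ^ xExp m lam i := by
    ext i k
    simp [labelledVandermonde, shufflePerm]
  have hy : (labelledVandermonde m n (Sum.elim x (-y))).submatrix
      (shufflePerm lam hlam ∘ Sum.inr) Sum.inr = Matrix.of fun j l => (-y l) ^ yExp m n lam j := by
    ext j l
    simp [labelledVandermonde, shufflePerm]
  have hsign := congrArg (Int.cast : ℤ → R) (sign_shufflePerm_mul_neg_one_pow hlam)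
  push_cast at hsign
  rw [hx, hy, Matrix.det_of_neg_pow, Units.smul_def, zsmul_eq_mul, ← hsign]
  ring

theorem prod_add_mul_det_mul_det_eq_sum (x : Fin m → R) (y : Fin n → R) :
    (∏ i, ∏ j, (x i + y j)) * (Matrix.of fun i k : Fin m => x k ^ (m - 1 - (i : ℕ))).det *
        (Matrix.of fun j l : Fin n => y l ^ (n - 1 - (j : ℕ))).det =
      ∑ lam : boxPartitions m n, (Matrix.of fun i k : Fin m => x k ^ xExp m lam i).det *
        (Matrix.of fun j l : Fin n => y l ^ yExp m n lam j).det := by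
  have hV := det_labelledVandermonde x (-y)
  rw [Matrix.det_eq_sum_sign_smul_det_mul_det _ (fun lam : boxPartitions m n =>
    shufflePerm lam.1 lam.2) bijective_shufflePerm_mul_sumCongr] at hV
  simp only [sign_shufflePerm_smul_det_mul_det, ← Finset.mul_sum, Pi.neg_apply,
    Matrix.det_of_neg_pow, sub_neg_eq_add] at hV
  refine ((isUnit_neg_one (α := R)).pow (∑ j : Fin n, (n - 1 - (j : ℕ)))).mul_left_cancel ?_
  rw [hV]
  ring

end LabelledVandermonde

theorem dual_cauchy_alternants_general (m n : ℕ) :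
    (∏ i : Fin m, ∏ j : Fin n,
        ((X (Sum.inl i) : MvPolynomial (Fin m ⊕ Fin n) ℤ) + X (Sum.inr j))) *
      (Matrix.of fun i k : Fin m =>
        (X (Sum.inl k) : MvPolynomial (Fin m ⊕ Fin n) ℤ) ^ (m - 1 - (i : ℕ))).det *
      (Matrix.of fun j l : Fin n =>
        (X (Sum.inr l) : MvPolynomial (Fin m ⊕ Fin n) ℤ) ^ (n - 1 - (j : ℕ))).det =
    ∑ᶠ lam ∈ {lam : Fin m → ℕ | Antitone lam ∧ ∀ i, lam i ≤ n},
      (Matrix.of fun i k : Fin m =>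
        (X (Sum.inl k) : MvPolynomial (Fin m ⊕ Fin n) ℤ) ^ (lam i + (m - 1 - (i : ℕ)))).det *
      (Matrix.of fun j l : Fin n =>
        (X (Sum.inr l) : MvPolynomial (Fin m ⊕ Fin n) ℤ) ^
          (boxComplConj m n lam j + (n - 1 - (j : ℕ)))).det := by
  rw [← finsum_set_coe_eq_finsum_mem]
  change _ = ∑ᶠ lam : boxPartitions m n, _
  rw [finsum_eq_sum_of_fintype]
  exact prod_add_mul_det_mul_det_eq_sum _ _

/-- **Dual Cauchy identity, alternant form.**  In `ℤ[x₁,…,x_m,y₁,…,y_n]`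
(with `x_k = X (Sum.inl k)` and `y_l = X (Sum.inr l)`),
`∏_{i,j} (x_i + y_j) · det[x_k^{m-i}] · det[y_l^{n-j}]
  = Σ_{lam ⊆ (n^m)} det[x_k^{lam_i + m - i}] · det[y_l^{μ(lam)_j + n - j}]`,
the sum ranging over partitions `lam` contained in the `m × n` box, where `μ(lam)` is
the conjugate of the complement of `lam` in the box. -/
theorem dual_cauchy_alternants (m n : ℕ) (hm : 1 ≤ m) (hn : 1 ≤ n) :
    (∏ i : Fin m, ∏ j : Fin n,
        ((X (Sum.inl i) : MvPolynomial (Fin m ⊕ Fin n) ℤ) + X (Sum.inr j))) *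
      (Matrix.of fun i k : Fin m =>
        (X (Sum.inl k) : MvPolynomial (Fin m ⊕ Fin n) ℤ) ^ (m - 1 - (i : ℕ))).det *
      (Matrix.of fun j l : Fin n =>
        (X (Sum.inr l) : MvPolynomial (Fin m ⊕ Fin n) ℤ) ^ (n - 1 - (j : ℕ))).det =
    ∑ᶠ lam ∈ {lam : Fin m → ℕ | Antitone lam ∧ ∀ i, lam i ≤ n},
      (Matrix.of fun i k : Fin m =>
        (X (Sum.inl k) : MvPolynomial (Fin m ⊕ Fin n) ℤ) ^ (lam i + (m - 1 - (i : ℕ)))).det *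
      (Matrix.of fun j l : Fin n =>
        (X (Sum.inr l) : MvPolynomial (Fin m ⊕ Fin n) ℤ) ^
          (boxComplConj m n lam j + (n - 1 - (j : ℕ)))).det :=
  dual_cauchy_alternants_general m n
end
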